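/- arXiv:0808.2779 — 15 statements merged into one kernel-verified Lean document; each statement's English description precedes it below -/
import Mathlib

section
/- Let (δ, π) be a cloud on a finite set X. Then π and the function x ↦ 1 − δ(x) are possibility distributions on X, and the credal set of the cloud is exactly the intersection of the credal sets of these two possibility distributions: 𝒫[δ,π] = 𝒫_π ∩ 𝒫_{1−δ}. -/
/-!
The upper half of the cloud constraint is literally the constraint of `𝒫_π`. For the lower half,
`P(δ ≥ α) ≤ 1 - α` is, by passing to complements, `P(1 - δ > 1 - α) ≥ α`, which is the constraint
of `𝒫_{1-δ}` at level `1 - α`; and `α ↦ 1 - α` permutes `[0,1]`.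
-/

open Finset

attribute [local instance] Classical.propDecidable

variable {X : Type*}

/-- A probability distribution on a finite set `X`. -/
def IsProbDist [Fintype X] (p : X → ℝ) : Prop :=
  (∀ x, 0 ≤ p x ∧ p x ≤ 1) ∧ ∑ x, p x = 1

/-- A cloud on `X`: a pair `(δ, π)` of `[0,1]`-valued maps with `δ ≤ π`,
`π` reaching `1` and `δ` reaching `0`. -/
def IsCloud (δ π : X → ℝ) : Prop :=
  (∀ x, 0 ≤ δ x) ∧ (∀ x, π x ≤ 1) ∧ (∀ x, δ x ≤ π x) ∧ (∃ x, π x = 1) ∧ (∃ y, δ y = 0)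

/-- The credal set of a cloud `(δ, π)`. -/
def credalCloud [Fintype X] (δ π : X → ℝ) : Set (X → ℝ) :=
  {p | IsProbDist p ∧ ∀ α : ℝ, 0 ≤ α → α ≤ 1 →
    (∑ x ∈ univ.filter (fun x => α ≤ δ x), p x) ≤ 1 - α ∧
    1 - α ≤ ∑ x ∈ univ.filter (fun x => α < π x), p x}

/-- A possibility distribution on `X`. -/
def IsPossDist (π : X → ℝ) : Prop :=
  (∀ x, 0 ≤ π x ∧ π x ≤ 1) ∧ ∃ x, π x = 1

/-- The credal set of a possibility distribution. -/
def credalPoss [Fintype X] (π : X → ℝ) : Set (X → ℝ) :=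
  {p | IsProbDist p ∧ ∀ α : ℝ, 0 ≤ α → α ≤ 1 →
    1 - α ≤ ∑ x ∈ univ.filter (fun x => α < π x), p x}

lemma IsCloud.isPossDist_right {δ π : X → ℝ} (h : IsCloud δ π) : IsPossDist π :=
  ⟨fun x => ⟨(h.1 x).trans (h.2.2.1 x), h.2.1 x⟩, h.2.2.2.1⟩

lemma IsCloud.isPossDist_one_sub_left {δ π : X → ℝ} (h : IsCloud δ π) :
    IsPossDist (fun x => 1 - δ x) := by
  obtain ⟨hδ0, hπ1, hδπ, -, y, hy⟩ := h
  exact ⟨fun x => ⟨by linarith [hδπ x, hπ1 x], by linarith [hδ0 x]⟩, y, by simp [hy]⟩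

section Finite

variable [Fintype X]

lemma sum_filter_not_eq_one_sub {p : X → ℝ} (hp : ∑ x, p x = 1) (P : X → Prop)
    [DecidablePred P] :
    ∑ x ∈ univ.filter (fun x => ¬ P x), p x = 1 - ∑ x ∈ univ.filter P, p x := by
  rw [← hp, ← sum_filter_add_sum_filter_not univ P p]
  ring

lemma sum_filter_lt_one_sub_eq {p : X → ℝ} (hp : ∑ x, p x = 1) (δ : X → ℝ) (β : ℝ) :
    ∑ x ∈ univ.filter (fun x => β < 1 - δ x), p x =
      1 - ∑ x ∈ univ.filter (fun x => 1 - β ≤ δ x), p x := by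
  rw [← sum_filter_not_eq_one_sub hp]
  exact sum_congr (filter_congr fun x _ => by constructor <;> intro <;> linarith) fun _ _ => rfl

lemma lower_cloud_constraint_iff {p : X → ℝ} (hp : ∑ x, p x = 1) (δ : X → ℝ) :
    (∀ α : ℝ, 0 ≤ α → α ≤ 1 → ∑ x ∈ univ.filter (fun x => α ≤ δ x), p x ≤ 1 - α) ↔
      ∀ β : ℝ, 0 ≤ β → β ≤ 1 → 1 - β ≤ ∑ x ∈ univ.filter (fun x => β < 1 - δ x), p x := by
  simp only [sum_filter_lt_one_sub_eq hp]
  constructor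
  · intro h β h0 h1
    linarith [h (1 - β) (by linarith) (by linarith)]
  · intro h α h0 h1
    have := h (1 - α) (by linarith) (by linarith)
    rw [sub_sub_cancel] at this
    linarith

lemma credalCloud_eq_inter_credalPoss (δ π : X → ℝ) :
    credalCloud δ π = credalPoss π ∩ credalPoss (fun x => 1 - δ x) := by
  ext p
  simp only [credalCloud, credalPoss, Set.mem_inter_iff, Set.mem_ofPred_eq]
  constructor
  · rintro ⟨hp, hcond⟩
    refine ⟨⟨hp, fun α h0 h1 => (hcond α h0 h1).2⟩, hp, ?_⟩
    exact (lower_cloud_constraint_iff hp.2 δ).1 fun α h0 h1 => (hcond α h0 h1).1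
  · rintro ⟨⟨hp, hupper⟩, -, hlower⟩
    have hlower' := (lower_cloud_constraint_iff hp.2 δ).2 hlower
    exact ⟨hp, fun α h0 h1 => ⟨hlower' α h0 h1, hupper α h0 h1⟩⟩

end Finite

/-- a cloud `(δ, π)` is representable by the pair of possibility
distributions `π` and `1 - δ`, and its credal set is the intersection of their
credal sets. -/
theorem cloud_credal_eq_inter_poss [Fintype X] (δ π : X → ℝ) (h : IsCloud δ π) :
    IsPossDist π ∧ IsPossDist (fun x => 1 - δ x) ∧
      credalCloud δ π = credalPoss π ∩ credalPoss (fun x => 1 - δ x) :=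
  ⟨h.isPossDist_right, h.isPossDist_one_sub_left, credalCloud_eq_inter_credalPoss δ π⟩
end

section
/- Let (δ, π) be a cloud on a finite set X. Then the mirror pair (1−π, 1−δ), i.e. the pair of functions x ↦ 1 − π(x) (as lower distribution) and x ↦ 1 − δ(x) (as upper distribution), is also a cloud on X, and it induces the same credal set: 𝒫[1−π, 1−δ] = 𝒫[δ,π]. -/
open Finset

attribute [local instance] Classical.propDecidable

variable {X : Type*}

/-!
Mirroring is an involution, so it suffices to show that it maps credal sets into credal
sets. Since `P(A) = 1 - P(Aᶜ)`, the level-`(1 - α)` constraints of `(δ, π)`, read on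
complements, are exactly the level-`α` constraints of `(1 - π, 1 - δ)`: the lower bound
for `{δ ≥ 1 - α}` becomes the upper bound for `{1 - δ > α}` and vice versa.
-/

theorem IsCloud.mirror {δ π : X → ℝ} (h : IsCloud δ π) :
    IsCloud (fun x => 1 - π x) (fun x => 1 - δ x) := by
  obtain ⟨hδ, hπ, hδπ, ⟨x₁, hx₁⟩, ⟨y₀, hy₀⟩⟩ := h
  exact ⟨fun x => sub_nonneg.2 (hπ x), fun x => sub_le_self 1 (hδ x),
    fun x => sub_le_sub_left (hδπ x) 1, ⟨y₀, by simp [hy₀]⟩, ⟨x₁, by simp [hx₁]⟩⟩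

section

variable [Fintype X]

theorem sum_filter_eq_one_sub_sum_filter_not {p : X → ℝ} (hp : ∑ x, p x = 1) (P : X → Prop) :
    ∑ x ∈ univ.filter P, p x = 1 - ∑ x ∈ univ.filter (fun x => ¬ P x), p x := by
  rw [← hp, ← sum_filter_add_sum_filter_not univ P p]
  ring

theorem credalCloud_subset_mirror (f g : X → ℝ) :
    credalCloud f g ⊆ credalCloud (fun x => 1 - g x) (fun x => 1 - f x) := by
  rintro p ⟨hp, hcut⟩
  refine ⟨hp, fun α hα₀ hα₁ => ?_⟩
  obtain ⟨hlower, hupper⟩ := hcut (1 - α) (by linarith) (by linarith)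
  have hcompl_g : ∑ x ∈ univ.filter (fun x => α ≤ 1 - g x), p x
      = 1 - ∑ x ∈ univ.filter (fun x => 1 - α < g x), p x := by
    rw [sum_filter_eq_one_sub_sum_filter_not hp.2]
    congr 2
    ext x
    simp only [mem_filter, mem_univ, true_and, not_le]
    constructor <;> intro <;> linarith
  have hcompl_f : ∑ x ∈ univ.filter (fun x => α < 1 - f x), p x
      = 1 - ∑ x ∈ univ.filter (fun x => 1 - α ≤ f x), p x := by
    rw [sum_filter_eq_one_sub_sum_filter_not hp.2]
    congr 2
    ext x
    simp only [mem_filter, mem_univ, true_and, not_lt]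
    constructor <;> intro <;> linarith
  constructor <;> linarith

theorem credalCloud_mirror (f g : X → ℝ) :
    credalCloud (fun x => 1 - g x) (fun x => 1 - f x) = credalCloud f g := by
  refine subset_antisymm ?_ (credalCloud_subset_mirror f g)
  simpa only [sub_sub_cancel] using
    credalCloud_subset_mirror (fun x => 1 - g x) (fun x => 1 - f x)

end

/-- the mirror pair `(1 - π, 1 - δ)` of a cloud `(δ, π)` is again a
cloud, and it induces the same credal set. -/
theorem mirror_cloud [Fintype X] (δ π : X → ℝ) (h : IsCloud δ π) :
    IsCloud (fun x => 1 - π x) (fun x => 1 - δ x) ∧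
      credalCloud (fun x => 1 - π x) (fun x => 1 - δ x) = credalCloud δ π :=
  ⟨h.mirror, credalCloud_mirror δ π⟩
end

section
/- Let (δ, π) be a cloud on a finite set X. Then the credal set 𝒫[δ,π] is nonempty if and only if for every nonempty proper subset A ⊊ X one has max_{x∈A} π(x) ≥ min_{y∉A} δ(y). -/
/-!
If `p` lies in the credal set and `A` violates the condition, then every level `α` between
`max_A π` and `min_{Aᶜ} δ` forces `P(Aᶜ) = 1 - α`, which cannot hold for two different levels.

Conversely, the condition guarantees that the intervals `[δ x, π x)` cover `[0, 1)`. Shrinking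
them to disjoint measurable pieces `J x ⊆ [δ x, π x)` with the same union, `p x := |J x|` is the
law of `x` under a uniform point of `[0, 1)`, and the two cloud constraints become
`P{δ ≥ α} ≤ |[α, 1)|` and `P{π ≤ α} ≤ |[0, α)|`.
-/

open Finset

attribute [local instance] Classical.propDecidable

variable {X : Type*}

open MeasureTheory Function

theorem exists_measurableSet_subset_pairwise_disjoint_iUnion_eq {Ω ι : Type*}
    [MeasurableSpace Ω] [Countable ι] (I : ι → Set Ω) (hI : ∀ i, MeasurableSet (I i)) :
    ∃ J : ι → Set Ω, (∀ i, MeasurableSet (J i)) ∧ (∀ i, J i ⊆ I i) ∧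
      Pairwise (Disjoint on J) ∧ ⋃ i, J i = ⋃ i, I i := by
  obtain ⟨e, he⟩ := Countable.exists_injective_nat ι
  have earlier_disjoint {i j : ι} (h : e i < e j) :
      Disjoint (I i) (I j \ ⋃ (k) (_ : e k < e j), I k) :=
    Set.disjoint_left.2 fun ω hω hω' => hω'.2 (Set.mem_biUnion h hω)
  refine ⟨fun i => I i \ ⋃ (j) (_ : e j < e i), I j,
    fun i => (hI i).diff (.iUnion fun j => .iUnion fun _ => hI j),
    fun i => Set.sdiff_subset, fun i j hij => ?_, ?_⟩
  · rcases (he.ne hij).lt_or_gt with h | h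
    · exact (earlier_disjoint h).mono_left Set.sdiff_subset
    · exact (earlier_disjoint h).symm.mono_right Set.sdiff_subset
  · refine subset_antisymm (Set.iUnion_mono fun i => Set.sdiff_subset) fun ω hω => ?_
    have hex : ∃ n, ∃ i, e i = n ∧ ω ∈ I i := by
      obtain ⟨i, hi⟩ := Set.mem_iUnion.1 hω
      exact ⟨_, i, rfl, hi⟩
    obtain ⟨i, hi, hωi⟩ := Nat.find_spec hex
    refine Set.mem_iUnion.2 ⟨i, hωi, fun hω' => ?_⟩
    obtain ⟨j, hj, hωj⟩ := Set.mem_iUnion₂.1 hω'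
    exact Nat.find_min hex (hi ▸ hj) ⟨j, rfl, hωj⟩

theorem exists_isProbDist_sum_le_measureReal_biUnion [Fintype X] {Ω : Type*}
    [MeasurableSpace Ω] (μ : Measure Ω) [IsProbabilityMeasure μ] (I : X → Set Ω)
    (hI : ∀ x, MeasurableSet (I x)) (hcover : ∀ᵐ ω ∂μ, ∃ x, ω ∈ I x) :
    ∃ p : X → ℝ, IsProbDist p ∧ ∀ S : Finset X, ∑ x ∈ S, p x ≤ μ.real (⋃ x ∈ S, I x) := by
  obtain ⟨J, hJ, hJI, hdisj, hJunion⟩ :=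
    exists_measurableSet_subset_pairwise_disjoint_iUnion_eq I hI
  have sum_eq (S : Finset X) : ∑ x ∈ S, μ.real (J x) = μ.real (⋃ x ∈ S, J x) :=
    (measureReal_biUnion_finset (hdisj.set_pairwise _) fun x _ => hJ x).symm
  have total : ∑ x, μ.real (J x) = 1 := by
    have hfull : μ (⋃ x, I x) = μ Set.univ :=
      (ae_mem_iff_measure_eq (MeasurableSet.iUnion hI).nullMeasurableSet).1
        (by simpa using hcover)
    simp only [sum_eq, mem_univ, Set.iUnion_true, hJunion]
    rw [measureReal_def, hfull]
    simp
  refine ⟨fun x => μ.real (J x), ⟨fun x => ⟨measureReal_nonneg, ?_⟩, total⟩, fun S => ?_⟩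
  · exact total ▸ single_le_sum (fun y _ => measureReal_nonneg) (mem_univ x)
  · exact (sum_eq S).le.trans (measureReal_mono
      (Set.biUnion_mono subset_rfl fun x _ => hJI x) (measure_ne_top _ _))

theorem exists_le_lt_of_inf'_compl_le_sup' [Fintype X] {δ π : X → ℝ}
    (hcond : ∀ A : Finset X, ∀ (hA : A.Nonempty) (hAc : Aᶜ.Nonempty),
      Aᶜ.inf' hAc δ ≤ A.sup' hA π)
    {u : ℝ} (hδ : ∃ y, δ y ≤ u) (hπ : ∃ x, u < π x) : ∃ x, δ x ≤ u ∧ u < π x := by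
  set A := univ.filter (fun x => π x ≤ u)
  rcases A.eq_empty_or_nonempty with hA | hA
  · obtain ⟨y, hy⟩ := hδ
    exact ⟨y, hy, by simpa [A] using filter_eq_empty_iff.1 hA (mem_univ y)⟩
  · have hAc : Aᶜ.Nonempty := hπ.imp fun x hx => by simpa [A] using hx
    obtain ⟨y, hy, hyinf⟩ := exists_mem_eq_inf' hAc δ
    refine ⟨y, ?_, by simpa [A] using hy⟩
    calc δ y = Aᶜ.inf' hAc δ := hyinf.symm
      _ ≤ A.sup' hA π := hcond A hA hAc
      _ ≤ u := sup'_le hA π fun x hx => (mem_filter.1 hx).2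

theorem sum_compl_eq_of_mem_credalCloud [Fintype X] {δ π p : X → ℝ}
    (hp : p ∈ credalCloud δ π) {A : Finset X} {α : ℝ} (hα0 : 0 ≤ α) (hα1 : α ≤ 1)
    (hπA : ∀ x ∈ A, π x ≤ α) (hδA : ∀ y ∈ Aᶜ, α ≤ δ y) : ∑ y ∈ Aᶜ, p y = 1 - α := by
  obtain ⟨⟨hp01, -⟩, hpα⟩ := hp
  obtain ⟨hupper, hlower⟩ := hpα α hα0 hα1
  apply le_antisymm
  · refine le_trans (sum_le_sum_of_subset_of_nonneg (fun y hy => ?_) fun x _ _ => (hp01 x).1)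
      hupper
    exact mem_filter.2 ⟨mem_univ y, hδA y hy⟩
  · refine hlower.trans (sum_le_sum_of_subset_of_nonneg (fun x hx => ?_) fun x _ _ => (hp01 x).1)
    exact mem_compl.2 fun hxA => (hπA x hxA).not_gt (mem_filter.1 hx).2

theorem inf'_compl_le_sup'_of_mem_credalCloud [Fintype X] {δ π p : X → ℝ}
    (h : IsCloud δ π) (hp : p ∈ credalCloud δ π) (A : Finset X) (hA : A.Nonempty)
    (hAc : Aᶜ.Nonempty) : Aᶜ.inf' hAc δ ≤ A.sup' hA π := by
  obtain ⟨hδ0, hπ1, hδπ, -, -⟩ := h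
  by_contra! hlt
  set m := A.sup' hA π
  set M := Aᶜ.inf' hAc δ
  have hm0 : 0 ≤ m := let ⟨x, hx⟩ := hA; (hδ0 x).trans ((hδπ x).trans (le_sup' π hx))
  have hM1 : M ≤ 1 := let ⟨y, hy⟩ := hAc; (inf'_le δ hy).trans ((hδπ y).trans (hπ1 y))
  have hπA : ∀ x ∈ A, π x ≤ m := fun x hx => le_sup' π hx
  have hδA : ∀ y ∈ Aᶜ, M ≤ δ y := fun y hy => inf'_le δ hy
  have at_m := sum_compl_eq_of_mem_credalCloud hp hm0 (hlt.le.trans hM1) hπA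
    fun y hy => hlt.le.trans (hδA y hy)
  have at_M := sum_compl_eq_of_mem_credalCloud hp (hm0.trans hlt.le) hM1
    (fun x hx => (hπA x hx).trans hlt.le) hδA
  linarith

theorem mem_credalCloud_of_sum_le_volume [Fintype X] {δ π p : X → ℝ} (hp : IsProbDist p)
    (hle : ∀ S : Finset X, ∑ x ∈ S, p x ≤
      (volume.restrict (Set.Ico (0 : ℝ) 1)).real (⋃ x ∈ S, Set.Ico (δ x) (π x))) :
    p ∈ credalCloud δ π := by
  set μ := volume.restrict (Set.Ico (0 : ℝ) 1)
  refine ⟨hp, fun α hα0 hα1 => ⟨?_, ?_⟩⟩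
  · calc ∑ x ∈ univ.filter (fun x => α ≤ δ x), p x
        ≤ μ.real (⋃ x ∈ univ.filter (fun x => α ≤ δ x), Set.Ico (δ x) (π x)) := hle _
      _ ≤ μ.real (Set.Ici α) := measureReal_mono (by
          simp only [Set.iUnion_subset_iff, mem_filter, mem_univ, true_and]
          exact fun x hx u hu => hx.trans hu.1) (measure_ne_top _ _)
      _ = 1 - α := by
          rw [measureReal_restrict_apply measurableSet_Ici, Set.inter_comm, ← Set.Ici_inter_Iio,
            Set.inter_right_comm, Set.Ici_inter_Ici, max_eq_right hα0, Set.Ici_inter_Iio,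
            Real.volume_real_Ico_of_le hα1]
  · have hsplit := sum_filter_add_sum_filter_not univ (fun x => α < π x) p
    have hrest : ∑ x ∈ univ.filter (fun x => ¬α < π x), p x ≤ α :=
      calc ∑ x ∈ univ.filter (fun x => ¬α < π x), p x
          ≤ μ.real (⋃ x ∈ univ.filter (fun x => ¬α < π x), Set.Ico (δ x) (π x)) := hle _
        _ ≤ μ.real (Set.Iio α) := measureReal_mono (by
            simp only [Set.iUnion_subset_iff, mem_filter, mem_univ, true_and, not_lt]
            exact fun x hx u hu => hu.2.trans_le hx) (measure_ne_top _ _)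
        _ = α := by
            rw [measureReal_restrict_apply measurableSet_Iio, Set.inter_comm, Set.Ico_inter_Iio,
              min_eq_right hα1, Real.volume_real_Ico_of_le hα0, sub_zero]
    linarith [hp.2]

/-- the credal set of a cloud `(δ, π)` on a finite set is nonempty
iff for every nonempty proper subset `A` of `X`, the maximum of `π` on `A` is at
least the minimum of `δ` outside `A`. -/
theorem cloud_credal_nonempty_iff [Fintype X] (δ π : X → ℝ) (h : IsCloud δ π) :
    (credalCloud δ π).Nonempty ↔
      ∀ A : Finset X, ∀ (hA : A.Nonempty) (hAc : Aᶜ.Nonempty),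
        Aᶜ.inf' hAc δ ≤ A.sup' hA π := by
  refine ⟨fun ⟨p, hp⟩ => inf'_compl_le_sup'_of_mem_credalCloud h hp, fun hcond => ?_⟩
  obtain ⟨-, -, -, ⟨x₁, hx₁⟩, ⟨y₀, hy₀⟩⟩ := h
  have : IsProbabilityMeasure (volume.restrict (Set.Ico (0 : ℝ) 1)) := ⟨by simp⟩
  have hcover : ∀ᵐ u ∂(volume.restrict (Set.Ico (0 : ℝ) 1)), ∃ x, u ∈ Set.Ico (δ x) (π x) :=
    (ae_restrict_iff' measurableSet_Ico).2 <| .of_forall fun u hu =>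
      exists_le_lt_of_inf'_compl_le_sup' hcond ⟨y₀, hy₀ ▸ hu.1⟩ ⟨x₁, hx₁ ▸ hu.2⟩
  obtain ⟨p, hp, hle⟩ := exists_isProbDist_sum_le_measureReal_biUnion _ _
    (fun x => measurableSet_Ico) hcover
  exact ⟨p, mem_credalCloud_of_sum_le_volume hp hle⟩
end

section
/- Let (δ, π) be a cloud on a finite set X = {x₁, …, xₙ} whose elements are indexed so that π(x₁) ≤ π(x₂) ≤ … ≤ π(xₙ) = 1. Then the credal set 𝒫[δ,π] is nonempty if and only if the following n − 1 inequalities hold: for every i ∈ {1, …, n−1}, π(x_i) ≥ min_{j > i} δ(x_j). -/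
/-!
If `p` lies in the credal set and `m = min_{j > i} δ xⱼ`, then
`{π > π xᵢ} ⊆ {xⱼ : j > i} ⊆ {δ ≥ m}`, hence `1 - π xᵢ ≤ P(π > π xᵢ) ≤ P(δ ≥ m) ≤ 1 - m`.

Conversely, split the unit mass into the increments `π xₖ - π xₖ₋₁` (with `π x₀ := 0`) and move
the `k`-th increment to a point of the tail `{xⱼ : j ≥ k}` where `δ` is smallest. Moving mass to
the right only raises `π`, which gives the lower constraint; the chain condition says that the
`δ`-value reached by the `k`-th increment is at most `π xₖ₋₁`, which gives the upper one.
-/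

open Finset

attribute [local instance] Classical.propDecidable

variable {X : Type*}

section Increments

variable {n : ℕ} (F : ℕ → ℝ) (α : ℝ)

theorem sum_filter_le_increment_le_max :
    ∑ i ∈ univ.filter (fun i : Fin n => α ≤ F i), (F (i + 1) - F i) ≤ max 0 (F n - α) := by
  rw [sum_filter, Fin.sum_univ_eq_sum_range (fun i => if α ≤ F i then F (i + 1) - F i else 0)]
  induction n with
  | zero => simp
  | succ n ih =>
    rw [sum_range_succ]
    split_ifs with h
    · rw [max_eq_right (sub_nonneg.2 h)] at ih
      exact le_max_of_le_right (by linarith)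
    · rw [max_eq_left (by linarith)] at ih
      exact le_max_of_le_left (by linarith)

variable {F α}

theorem sub_le_sum_filter_lt_increment (hF : Monotone F) (hα : F 0 ≤ α) :
    F n - α ≤ ∑ i ∈ univ.filter (fun i : Fin n => α < F (i + 1)), (F (i + 1) - F i) := by
  rw [sum_filter,
    Fin.sum_univ_eq_sum_range (fun i => if α < F (i + 1) then F (i + 1) - F i else 0)]
  induction n with
  | zero => simpa using hα
  | succ n ih =>
    have hinc : 0 ≤ ∑ i ∈ range n, if α < F (i + 1) then F (i + 1) - F i else 0 :=
      sum_nonneg fun i _ => by split_ifs <;> linarith [hF i.le_succ]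
    rw [sum_range_succ]
    split_ifs with h <;> linarith

theorem sum_increment (hF0 : F 0 = 0) : ∑ i : Fin n, (F (i + 1) - F i) = F n := by
  rw [Fin.sum_univ_eq_sum_range (fun i => F (i + 1) - F i), sum_range_sub, hF0, sub_zero]

end Increments

/-- `cumulative π k` is `π xₖ` in the paper's 1-based indexing, padded with `0` at `k = 0` and
with `1` beyond `n`. -/
def cumulative {n : ℕ} (π : Fin n → ℝ) : ℕ → ℝ
  | 0 => 0
  | k + 1 => if h : k < n then π ⟨k, h⟩ else 1

section Cumulative

variable {n : ℕ} (π : Fin n → ℝ)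

theorem cumulative_succ (i : Fin n) : cumulative π (i + 1) = π i := by
  simp [cumulative]

theorem cumulative_succ_of_ge {k : ℕ} (hk : n ≤ k) : cumulative π (k + 1) = 1 := by
  simp [cumulative, hk]

theorem monotone_cumulative {π : Fin n → ℝ} (hπ : Monotone π) (h0 : ∀ i, 0 ≤ π i)
    (h1 : ∀ i, π i ≤ 1) : Monotone (cumulative π) := by
  refine monotone_nat_of_le_succ fun k => ?_
  rcases k with _ | k
  · rcases Nat.eq_zero_or_pos n with rfl | hn
    · simp [cumulative]
    · simpa [cumulative, hn] using h0 ⟨0, hn⟩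
  · rcases lt_or_ge (k + 1) n with hk | hk
    · simpa [cumulative, hk, k.lt_succ_self.trans hk] using hπ (Fin.mk_le_mk.2 k.le_succ)
    · rw [cumulative_succ_of_ge π hk]
      rcases lt_or_ge k n with hk' | hk'
      · simpa [cumulative, hk'] using h1 ⟨k, hk'⟩
      · rw [cumulative_succ_of_ge π hk']

end Cumulative

section TailArgmin

variable {ι β : Type*} [Preorder ι] [LocallyFiniteOrderTop ι] [LinearOrder β]

noncomputable def tailArgmin (f : ι → β) (i : ι) : ι :=
  ((Ici i).exists_min_image f nonempty_Ici).choose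

theorem le_tailArgmin (f : ι → β) (i : ι) : i ≤ tailArgmin f i :=
  mem_Ici.1 ((Ici i).exists_min_image f nonempty_Ici).choose_spec.1

theorem apply_tailArgmin_le (f : ι → β) {i j : ι} (h : i ≤ j) : f (tailArgmin f i) ≤ f j :=
  ((Ici i).exists_min_image f nonempty_Ici).choose_spec.2 j (mem_Ici.2 h)

end TailArgmin

noncomputable def pushforward {ι : Type*} [Fintype ι] (σ : ι → X) (c : ι → ℝ) (x : X) : ℝ :=
  ∑ i ∈ univ.filter (fun i => σ i = x), c i

theorem sum_pushforward {ι : Type*} [Fintype ι] (σ : ι → X) (c : ι → ℝ) (s : Finset X) :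
    ∑ x ∈ s, pushforward σ c x = ∑ i ∈ univ.filter (fun i => σ i ∈ s), c i :=
  sum_fiberwise_eq_sum_filter univ s σ c

variable [Fintype X]

theorem isProbDist_of_nonneg {p : X → ℝ} (h0 : ∀ x, 0 ≤ p x) (h1 : ∑ x, p x = 1) :
    IsProbDist p :=
  ⟨fun x => ⟨h0 x, h1 ▸ single_le_sum (fun y _ => h0 y) (mem_univ x)⟩, h1⟩

theorem le_of_mem_credalCloud_of_superlevel_subset {δ π p : X → ℝ} (hp : p ∈ credalCloud δ π)
    {α β : ℝ} (hα0 : 0 ≤ α) (hα1 : α ≤ 1) (hβ0 : 0 ≤ β) (hβ1 : β ≤ 1)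
    (hsub : ∀ x, α < π x → β ≤ δ x) : β ≤ α := by
  have hmono : ∑ x ∈ univ.filter (fun x => α < π x), p x
      ≤ ∑ x ∈ univ.filter (fun x => β ≤ δ x), p x :=
    sum_le_sum_of_subset_of_nonneg (monotone_filter_right _ fun x _ => hsub x)
      fun x _ _ => (hp.1.1 x).1
  linarith [(hp.2 α hα0 hα1).2, (hp.2 β hβ0 hβ1).1]

theorem pushforward_mem_credalCloud {n : ℕ} {δ π : X → ℝ} {F : ℕ → ℝ} (σ : Fin n → X)
    (hF : Monotone F) (hF0 : F 0 = 0) (hFn : F n = 1)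
    (hδ : ∀ i : Fin n, δ (σ i) ≤ F i) (hπ : ∀ i : Fin n, F (i + 1) ≤ π (σ i)) :
    pushforward σ (fun i => F (i + 1) - F i) ∈ credalCloud δ π := by
  have hinc : ∀ i : Fin n, 0 ≤ F (i + 1) - F i := fun i => sub_nonneg.2 (hF i.val.le_succ)
  refine ⟨isProbDist_of_nonneg (fun x => sum_nonneg fun i _ => hinc i) ?_,
    fun α hα0 hα1 => ⟨?_, ?_⟩⟩
  · rw [sum_pushforward, filter_true_of_mem fun i _ => mem_univ _, sum_increment hF0, hFn]
  · calc ∑ x ∈ univ.filter (fun x => α ≤ δ x), pushforward σ (fun i => F (i + 1) - F i) x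
        = ∑ i ∈ univ.filter (fun i => α ≤ δ (σ i)), (F (i + 1) - F i) := by
          rw [sum_pushforward]; simp only [mem_filter, mem_univ, true_and]
      _ ≤ ∑ i ∈ univ.filter (fun i : Fin n => α ≤ F i), (F (i + 1) - F i) :=
          sum_le_sum_of_subset_of_nonneg
            (monotone_filter_right _ fun i _ h => h.trans (hδ i)) fun i _ _ => hinc i
      _ ≤ max 0 (F n - α) := sum_filter_le_increment_le_max F α
      _ = 1 - α := by rw [hFn, max_eq_right (by linarith)]
  · calc 1 - α = F n - α := by rw [hFn]
      _ ≤ ∑ i ∈ univ.filter (fun i : Fin n => α < F (i + 1)), (F (i + 1) - F i) :=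
          sub_le_sum_filter_lt_increment hF (hF0 ▸ hα0)
      _ ≤ ∑ i ∈ univ.filter (fun i => α < π (σ i)), (F (i + 1) - F i) :=
          sum_le_sum_of_subset_of_nonneg
            (monotone_filter_right _ fun i _ h => h.trans_le (hπ i)) fun i _ _ => hinc i
      _ = ∑ x ∈ univ.filter (fun x => α < π x), pushforward σ (fun i => F (i + 1) - F i) x := by
          rw [sum_pushforward]; simp only [mem_filter, mem_univ, true_and]

theorem apply_tailArgmin_le_cumulative {n : ℕ} {δ π : Fin n → ℝ} {y₀ : Fin n} (hy₀ : δ y₀ ≤ 0)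
    (hchain : ∀ i : Fin n, ∀ hi : (univ.filter (fun j => i < j)).Nonempty,
      (univ.filter (fun j => i < j)).inf' hi δ ≤ π i)
    (i : Fin n) : δ (tailArgmin δ i) ≤ cumulative π i := by
  obtain ⟨_ | k, hi⟩ := i
  · exact (apply_tailArgmin_le δ (Fin.mk_le_mk.2 y₀.val.zero_le)).trans hy₀
  · have hk : k < n := by omega
    have hne : (univ.filter fun j => (⟨k, hk⟩ : Fin n) < j).Nonempty :=
      ⟨⟨k + 1, hi⟩, by simp [Fin.lt_def]⟩
    obtain ⟨j, hj, hjmin⟩ := exists_mem_eq_inf' hne δ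
    have hij : (⟨k + 1, hi⟩ : Fin n) ≤ j := by
      simp only [mem_filter, mem_univ, true_and, Fin.lt_def] at hj
      exact Fin.mk_le_mk.2 hj
    calc δ (tailArgmin δ ⟨k + 1, hi⟩) ≤ δ j := apply_tailArgmin_le δ hij
      _ ≤ π ⟨k, hk⟩ := hjmin ▸ hchain _ hne
      _ = cumulative π (k + 1) := (cumulative_succ π ⟨k, hk⟩).symm

/-- for a cloud `(δ, π)` on `X = {x₁, …, xₙ}` indexed so that
`π` is non-decreasing with `π xₙ = 1`, the credal set is nonempty iff
`π xᵢ ≥ min_{j > i} δ xⱼ` for every `i` with a nonempty tail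
(i.e. `i ∈ {1, …, n-1}`). -/
theorem cloud_credal_nonempty_iff_chain {n : ℕ} (hn : 0 < n) (δ π : Fin n → ℝ)
    (h : IsCloud δ π) (hmono : Monotone π)
    (hlast : π ⟨n - 1, Nat.sub_lt hn Nat.one_pos⟩ = 1) :
    (credalCloud δ π).Nonempty ↔
      ∀ i : Fin n, ∀ hi : (univ.filter (fun j => i < j)).Nonempty,
        (univ.filter (fun j => i < j)).inf' hi δ ≤ π i := by
  obtain ⟨hδ0, hπ1, hδπ, -, y₀, hy₀⟩ := h
  have hπ0 : ∀ i, 0 ≤ π i := fun i => (hδ0 i).trans (hδπ i)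
  constructor
  · rintro ⟨p, hp⟩ i hi
    obtain ⟨j, hj⟩ := hi
    refine le_of_mem_credalCloud_of_superlevel_subset hp (hπ0 i) (hπ1 i)
      (le_inf' _ _ fun k _ => hδ0 k) ((inf'_le δ hj).trans ((hδπ j).trans (hπ1 j)))
      fun x hx => inf'_le δ ?_
    simpa using hmono.reflect_lt hx
  · intro hchain
    have hFn : cumulative π n = 1 := by
      simpa [Nat.sub_add_cancel hn] using (cumulative_succ π ⟨n - 1, _⟩).trans hlast
    exact ⟨_, pushforward_mem_credalCloud (tailArgmin δ) (monotone_cumulative hmono hπ0 hπ1)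
      rfl hFn (apply_tailArgmin_le_cumulative hy₀.le hchain)
      fun i => (cumulative_succ π i).trans_le (hmono (le_tailArgmin δ i))⟩
end

section
/- Let (δ, π) be a thin cloud on a finite nonempty set X, that is, a cloud with δ = π. Then its credal set is empty: 𝒫[δ,π] = ∅. -/
open Finset

attribute [local instance] Classical.propDecidable

variable {X : Type*}

theorem sum_filter_le_le_sum_filter_lt_of_mem_credalCloud [Fintype X] {δ π p : X → ℝ}
    (hp : p ∈ credalCloud δ π) {α : ℝ} (hα₀ : 0 ≤ α) (hα₁ : α ≤ 1) :
    ∑ x ∈ univ.filter (fun x => α ≤ δ x), p x ≤ ∑ x ∈ univ.filter (fun x => α < π x), p x :=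
  (hp.2 α hα₀ hα₁).1.trans (hp.2 α hα₀ hα₁).2

theorem add_sum_filter_lt_le_sum_filter_le [Fintype X] {p : X → ℝ} (hp : ∀ y, 0 ≤ p y)
    (f : X → ℝ) (x : X) :
    p x + ∑ y ∈ univ.filter (fun y => f x < f y), p y ≤
      ∑ y ∈ univ.filter (fun y => f x ≤ f y), p y := by
  rw [← sum_insert (by simp)]
  refine sum_le_sum_of_subset_of_nonneg ?_ fun y _ _ => hp y
  intro y hy
  rcases mem_insert.1 hy with rfl | hy
  · simp
  · exact mem_filter.2 ⟨mem_univ y, (mem_filter.1 hy).2.le⟩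

/-- Testing the credal constraints at the level `α = δ x` squeezes the mass of the level set
`{y | δ y = δ x}`, which contains `x`, to zero. -/
theorem eq_zero_of_mem_credalCloud_self [Fintype X] {δ p : X → ℝ} (hp : p ∈ credalCloud δ δ)
    {x : X} (hx₀ : 0 ≤ δ x) (hx₁ : δ x ≤ 1) : p x = 0 := by
  have hp₀ : ∀ y, 0 ≤ p y := fun y => (hp.1.1 y).1
  have := (add_sum_filter_lt_le_sum_filter_le hp₀ δ x).trans
    (sum_filter_le_le_sum_filter_lt_of_mem_credalCloud hp hx₀ hx₁)
  linarith [hp₀ x]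

theorem thin_cloud_credal_empty_general [Fintype X] (δ π : X → ℝ)
    (h : IsCloud δ π) (hthin : δ = π) :
    credalCloud δ π = ∅ := by
  subst hthin
  refine Set.eq_empty_of_forall_notMem fun p hp => ?_
  have hzero : ∀ x, p x = 0 := fun x =>
    eq_zero_of_mem_credalCloud_self hp (h.1 x) (h.2.1 x)
  have hsum : ∑ x, p x = 1 := hp.1.2
  simp [hzero] at hsum

/-- a thin cloud (`δ = π`) on a finite nonempty set has an empty
credal set. -/
theorem thin_cloud_credal_empty [Fintype X] [Nonempty X] (δ π : X → ℝ)
    (h : IsCloud δ π) (hthin : δ = π) :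
    credalCloud δ π = ∅ :=
  thin_cloud_credal_empty_general δ π h hthin
end

section
/- Let X = {x₁, …, xₙ} be a finite set and let π : X → [0,1] satisfy π(x₁) < π(x₂) < … < π(xₙ) = 1. Define δ : X → [0,1] by δ(x₁) = 0 and δ(x_i) = π(x_{i−1}) for i ≥ 2. Then (δ, π) is a cloud on X whose credal set contains exactly one probability distribution, namely the p given by p(x_i) = π(x_i) − π(x_{i−1}) for all i (with the convention π(x₀) = 0). -/
/-! Write `0 = F 0 ≤ F 1 < ⋯ < F n = 1` for the values of `π`, so that (counting from `0`)
`δ xᵢ = F i`, `π xᵢ = F (i + 1)` and `p xᵢ = F (i + 1) - F i`. Every level set `{α ≤ δ}` or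
`{α < π}` is then a tail `{xᵢ | k ≤ i}`, on which `p` telescopes to `1 - F k`; this puts `p` in
the credal set. Conversely, at the level `α = F k` (`k ≥ 1`) the set `{α < π}` is exactly the
tail from `k` and `{α ≤ δ}` contains it, so the two constraints pin the mass of that tail under
any member of the credal set to `1 - F k`; and tail masses determine a distribution. -/

open Finset

attribute [local instance] Classical.propDecidable

variable {X : Type*}

namespace ThinCloud

variable {n : ℕ}

def tail (n k : ℕ) : Finset (Fin n) := univ.filter fun i => k ≤ (i : ℕ)

@[simp]
lemma mem_tail {k : ℕ} {i : Fin n} : i ∈ tail n k ↔ k ≤ (i : ℕ) := by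
  simp [tail]

lemma tail_zero : tail n 0 = univ := by
  ext i
  simp

lemma sum_tail_eq_sum_Ico {M : Type*} [AddCommMonoid M] (g : ℕ → M) (k : ℕ) :
    ∑ i ∈ tail n k, g i = ∑ m ∈ Ico k n, g m := by
  refine (sum_map (tail n k) Fin.valEmbedding g).symm.trans (congrArg (Finset.sum · g) ?_)
  ext m
  simp only [mem_map, mem_tail, Fin.valEmbedding_apply, mem_Ico]
  exact ⟨by rintro ⟨i, hi, rfl⟩; exact ⟨hi, i.isLt⟩, fun h => ⟨⟨m, h.2⟩, h.1, rfl⟩⟩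

lemma sum_tail_eq_add {M : Type*} [AddCommMonoid M] (f : Fin n → M) (i : Fin n) :
    ∑ j ∈ tail n i, f j = f i + ∑ j ∈ tail n (i + 1), f j := by
  have h : tail n i = insert i (tail n (i + 1)) := by
    ext j
    simp only [mem_tail, mem_insert, Fin.ext_iff]
    omega
  rw [h, sum_insert (by simp)]

lemma eq_of_sum_tail_eq {M : Type*} [AddCancelCommMonoid M] {f g : Fin n → M}
    (h : ∀ k ≤ n, ∑ i ∈ tail n k, f i = ∑ i ∈ tail n k, g i) : f = g := by
  funext i
  have hi := h i i.isLt.le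
  rw [sum_tail_eq_add, sum_tail_eq_add, h (i + 1) i.isLt] at hi
  exact add_right_cancel hi

lemma exists_iff_le_of_monotone {P : Fin n → Prop} (hP : Monotone P) :
    ∃ k ≤ n, ∀ i : Fin n, P i ↔ k ≤ (i : ℕ) := by
  have hQ : ∃ m, ∀ h : m < n, P ⟨m, h⟩ := ⟨n, fun h => absurd h (lt_irrefl n)⟩
  refine ⟨Nat.find hQ, Nat.find_min' hQ fun h => absurd h (lt_irrefl n), fun i => ⟨?_, ?_⟩⟩
  · exact fun hi => Nat.find_min' hQ fun _ => hi
  · intro hi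
    exact hP (Fin.le_def.mpr hi) (Nat.find_spec hQ (by omega))

lemma filter_eq_tail {P : Fin n → Prop} [DecidablePred P] {k : ℕ}
    (h : ∀ i : Fin n, P i ↔ k ≤ (i : ℕ)) : univ.filter P = tail n k := by
  ext i
  simp [h]

section Chain

variable {F : ℕ → ℝ}

lemma sum_tail_sub (hFn : F n = 1) {k : ℕ} (hk : k ≤ n) :
    ∑ i ∈ tail n k, (F (i + 1) - F i) = 1 - F k := by
  rw [sum_tail_eq_sum_Ico (fun m => F (m + 1) - F m), sum_Ico_sub _ hk, hFn]

lemma sum_filter_sub_of_iff (hFn : F n = 1) {P : Fin n → Prop} [DecidablePred P] {k : ℕ}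
    (hk : k ≤ n) (h : ∀ i : Fin n, P i ↔ k ≤ (i : ℕ)) :
    ∑ i ∈ univ.filter P, (F (i + 1) - F i) = 1 - F k := by
  rw [filter_eq_tail h, sum_tail_sub hFn hk]

theorem isCloud_chain (hn : 0 < n) (hF0 : F 0 = 0) (hFn : F n = 1)
    (hF : MonotoneOn F (Set.Iic n)) :
    IsCloud (fun i : Fin n => F i) (fun i => F (i + 1)) := by
  refine ⟨fun i => ?_, fun i => ?_, fun i => ?_, ⟨⟨n - 1, by omega⟩, ?_⟩, ⟨⟨0, hn⟩, hF0⟩⟩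
  · exact hF0 ▸ hF (by simp) (by simp [i.isLt.le]) (Nat.zero_le _)
  · exact hFn ▸ hF (by simp [i.isLt]) (by simp) i.isLt
  · exact hF (by simp [i.isLt.le]) (by simp [i.isLt]) (Nat.le_succ _)
  · simpa [Nat.sub_add_cancel hn] using hFn

theorem mem_credalCloud_chain (hF0 : F 0 = 0) (hFn : F n = 1) (hF : MonotoneOn F (Set.Iic n)) :
    (fun i : Fin n => F (i + 1) - F i) ∈
      credalCloud (fun i : Fin n => F i) (fun i => F (i + 1)) := by
  have hFI : ∀ {a b : ℕ}, a ≤ b → b ≤ n → F a ≤ F b := fun hab hb =>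
    hF (Set.mem_Iic.mpr (hab.trans hb)) (Set.mem_Iic.mpr hb) hab
  refine ⟨⟨fun i => ⟨?_, ?_⟩, ?_⟩, fun α hα0 hα1 => ⟨?_, ?_⟩⟩
  · linarith [hFI (Nat.le_succ i) i.isLt]
  · linarith [hFI (Nat.le_succ i) i.isLt, hFI (Nat.zero_le i) i.isLt.le, hFI i.isLt le_rfl]
  · rw [← tail_zero, sum_tail_sub hFn (Nat.zero_le n), hF0, sub_zero]
  · obtain ⟨k, hk, hiff⟩ := exists_iff_le_of_monotone (P := fun i : Fin n => α ≤ F i)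
      fun i j hij hi => hi.trans (hFI hij j.isLt.le)
    rw [sum_filter_sub_of_iff hFn hk hiff]
    rcases hk.lt_or_eq with hk | rfl
    · linarith [(hiff ⟨k, hk⟩).mpr le_rfl]
    · linarith
  · obtain ⟨k, hk, hiff⟩ := exists_iff_le_of_monotone (P := fun i : Fin n => α < F (i + 1))
      fun i j hij hi => hi.trans_le (hFI (Nat.succ_le_succ hij) j.isLt)
    rw [sum_filter_sub_of_iff hFn hk hiff]
    rcases Nat.eq_zero_or_pos k with rfl | hk0
    · linarith
    · have := (hiff ⟨k - 1, by omega⟩).not.mpr (show ¬k ≤ k - 1 by omega)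
      simp only [not_lt, Nat.sub_add_cancel hk0] at this
      linarith

theorem sum_tail_of_mem_credalCloud_chain (hF0 : F 0 = 0) (hFn : F n = 1)
    (hF : MonotoneOn F (Set.Iic n)) (hF' : StrictMonoOn F (Set.Icc 1 n)) {q : Fin n → ℝ}
    (hq : q ∈ credalCloud (fun i : Fin n => F i) (fun i => F (i + 1))) {k : ℕ} (hk : k ≤ n) :
    ∑ i ∈ tail n k, q i = 1 - F k := by
  obtain ⟨⟨hq01, hq1⟩, hqα⟩ := hq
  rcases Nat.eq_zero_or_pos k with rfl | hk0
  · rw [tail_zero, hq1, hF0, sub_zero]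
  have hFk : F k ∈ Set.Icc (0 : ℝ) 1 :=
    ⟨hF0 ▸ hF (by simp) (Set.mem_Iic.mpr hk) (Nat.zero_le k),
      hFn ▸ hF (Set.mem_Iic.mpr hk) (by simp) hk⟩
  obtain ⟨hδ, hπ⟩ := hqα (F k) hFk.1 hFk.2
  have hπtail : univ.filter (fun i : Fin n => F k < F (i + 1)) = tail n k :=
    filter_eq_tail fun i =>
      (hF'.lt_iff_lt ⟨hk0, hk⟩ ⟨Nat.le_add_left 1 i, i.isLt⟩).trans Nat.lt_succ_iff
  have hδtail : tail n k ⊆ univ.filter (fun i : Fin n => F k ≤ F i) := fun i hi => by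
    simp only [mem_tail] at hi
    simpa using hF (Set.mem_Iic.mpr hk) (Set.mem_Iic.mpr i.isLt.le) hi
  have := sum_le_sum_of_subset_of_nonneg hδtail fun i _ _ => (hq01 i).1
  rw [hπtail] at hπ
  linarith

theorem credalCloud_chain_eq_singleton (hF0 : F 0 = 0) (hFn : F n = 1)
    (hF : MonotoneOn F (Set.Iic n)) (hF' : StrictMonoOn F (Set.Icc 1 n)) :
    credalCloud (fun i : Fin n => F i) (fun i => F (i + 1)) =
      {fun i : Fin n => F (i + 1) - F i} := by
  refine Set.eq_singleton_iff_unique_mem.mpr ⟨mem_credalCloud_chain hF0 hFn hF, fun q hq => ?_⟩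
  refine eq_of_sum_tail_eq fun k hk => ?_
  rw [sum_tail_of_mem_credalCloud_chain hF0 hFn hF hF' hq hk, sum_tail_sub hFn hk]

end Chain

/-- `oneIndexed π k` is the paper's `π(x_k)` for `x_k = ⟨k - 1, _⟩`, with the convention
`π(x₀) = 0`. -/
noncomputable def oneIndexed (π : Fin n → ℝ) (k : ℕ) : ℝ :=
  if h : 0 < k ∧ k ≤ n then π ⟨k - 1, by omega⟩ else 0

variable (π : Fin n → ℝ)

lemma oneIndexed_zero : oneIndexed π 0 = 0 := by
  simp [oneIndexed]

lemma oneIndexed_succ (i : Fin n) : oneIndexed π (i + 1) = π i := by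
  simp [oneIndexed, Nat.succ_le_of_lt i.isLt]

lemma oneIndexed_coe (i : Fin n) :
    oneIndexed π i = if h0 : (i : ℕ) = 0 then 0 else π ⟨i - 1, by omega⟩ := by
  by_cases h0 : (i : ℕ) = 0
  · simp [oneIndexed, h0]
  · simp [oneIndexed, h0, Nat.pos_of_ne_zero h0, i.isLt.le]

variable {π}

lemma monotoneOn_oneIndexed (hpos : ∀ i, 0 ≤ π i) (hπ : Monotone π) :
    MonotoneOn (oneIndexed π) (Set.Iic n) := by
  intro a ha b hb hab
  simp only [Set.mem_Iic] at ha hb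
  unfold oneIndexed
  split_ifs with h₁ h₂ h₂
  · exact hπ (Fin.le_def.mpr (show a - 1 ≤ b - 1 by omega))
  · omega
  · exact hpos _
  · exact le_rfl

lemma strictMonoOn_oneIndexed (hπ : StrictMono π) :
    StrictMonoOn (oneIndexed π) (Set.Icc 1 n) := by
  intro a ha b hb hab
  simp only [Set.mem_Icc] at ha hb
  rw [oneIndexed, oneIndexed, dif_pos (by omega), dif_pos (by omega)]
  exact hπ (Fin.lt_def.mpr (by simp only; omega))

end ThinCloud

open ThinCloud in
/-- if `π` is strictly increasing on `X = {x₁, …, xₙ}` with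
`π xₙ = 1`, and `δ x₁ = 0`, `δ xᵢ = π xᵢ₋₁` for `i ≥ 2`, then `(δ, π)` is a
cloud whose credal set contains exactly one probability distribution, namely
`p xᵢ = π xᵢ - π xᵢ₋₁` (with the convention `π x₀ = 0`). -/
theorem thin_like_cloud_singleton {n : ℕ} (hn : 0 < n) (π δ p : Fin n → ℝ)
    (hpos : ∀ i, 0 ≤ π i) (hmono : StrictMono π)
    (hlast : π ⟨n - 1, Nat.sub_lt hn Nat.one_pos⟩ = 1)
    (hδ : ∀ i : Fin n, δ i = if h0 : i.val = 0 then 0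
      else π ⟨i.val - 1, lt_trans (Nat.sub_lt (Nat.pos_of_ne_zero h0) Nat.one_pos) i.isLt⟩)
    (hp : ∀ i : Fin n, p i = π i - (if h0 : i.val = 0 then 0
      else π ⟨i.val - 1, lt_trans (Nat.sub_lt (Nat.pos_of_ne_zero h0) Nat.one_pos) i.isLt⟩)) :
    IsCloud δ π ∧ credalCloud δ π = {p} := by
  have hF0 : oneIndexed π 0 = 0 := oneIndexed_zero π
  have hFn : oneIndexed π n = 1 := by
    simpa [Nat.sub_add_cancel hn] using (oneIndexed_succ π ⟨n - 1, by omega⟩).trans hlast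
  have hF := monotoneOn_oneIndexed hpos hmono.monotone
  have hcloud := isCloud_chain hn hF0 hFn hF
  have hcredal := credalCloud_chain_eq_singleton hF0 hFn hF (strictMonoOn_oneIndexed hmono)
  have hπF : (fun i : Fin n => oneIndexed π (i + 1)) = π := funext (oneIndexed_succ π)
  rw [hπF] at hcloud hcredal
  obtain rfl : δ = fun i : Fin n => oneIndexed π i :=
    funext fun i => (hδ i).trans (oneIndexed_coe π i).symm
  obtain rfl : p = fun i : Fin n => π i - oneIndexed π i :=
    funext fun i => by rw [hp, oneIndexed_coe]
  exact ⟨hcloud, by simpa only [oneIndexed_succ] using hcredal⟩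
end

section
/- Let (δ, π) be a cloud on a finite set X. Then δ and π are comonotonic if and only if the family of all sets of the form B_β = {x ∈ X : π(x) > β} (β ∈ [0,1]) and C_{β'} = {x ∈ X : δ(x) ≥ β'} (β' ∈ [0,1]) is totally ordered by inclusion, i.e., for all β, β' ∈ [0,1] one has B_β ⊆ C_{β'} or C_{β'} ⊆ B_β. -/
open Finset

attribute [local instance] Classical.propDecidable

variable {X : Type*}

/-- Two maps `δ, π : X → [0,1]` are comonotonic when there are no `x, y` with
`δ x < δ y` and `π x > π y`. -/
def Comonotonic (δ π : X → ℝ) : Prop := ∀ x y, δ x < δ y → π x ≤ π y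

theorem Comonotonic.superlevel_subset_or_subset {δ π : X → ℝ} (hc : Comonotonic δ π)
    (β β' : ℝ) : {x | β < π x} ⊆ {x | β' ≤ δ x} ∨ {x | β' ≤ δ x} ⊆ {x | β < π x} := by
  by_contra! hne
  obtain ⟨⟨x, hxπ, hxδ⟩, ⟨y, hyδ, hyπ⟩⟩ := And.imp Set.not_subset.mp Set.not_subset.mp hne
  have hδ : δ x < δ y := (not_le.mp hxδ).trans_le hyδ
  have hπ : π y < π x := (not_lt.mp hyπ).trans_lt hxπ
  exact (hc x y hδ).not_gt hπ

theorem comonotonic_of_superlevel_subset_or_subset {δ π : X → ℝ}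
    (h : ∀ y, {x | π y < π x} ⊆ {x | δ y ≤ δ x} ∨ {x | δ y ≤ δ x} ⊆ {x | π y < π x}) :
    Comonotonic δ π := by
  intro x y hδ
  by_contra! hπ
  rcases h y with hs | hs
  · exact (show δ y ≤ δ x from hs hπ).not_gt hδ
  · exact lt_irrefl (π y) (hs (le_refl (δ y)))

theorem IsCloud.lower_mem_Icc {δ π : X → ℝ} (h : IsCloud δ π) (x : X) :
    δ x ∈ Set.Icc (0 : ℝ) 1 :=
  ⟨h.1 x, (h.2.2.1 x).trans (h.2.1 x)⟩

theorem IsCloud.upper_mem_Icc {δ π : X → ℝ} (h : IsCloud δ π) (x : X) :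
    π x ∈ Set.Icc (0 : ℝ) 1 :=
  ⟨(h.1 x).trans (h.2.2.1 x), h.2.1 x⟩

theorem comonotonic_iff_nested_general (δ π : X → ℝ) (h : IsCloud δ π) :
    Comonotonic δ π ↔
      ∀ β β' : ℝ, β ∈ Set.Icc (0 : ℝ) 1 → β' ∈ Set.Icc (0 : ℝ) 1 →
        ({x | β < π x} ⊆ {x | β' ≤ δ x} ∨ {x | β' ≤ δ x} ⊆ {x | β < π x}) :=
  ⟨fun hc β β' _ _ => hc.superlevel_subset_or_subset β β',
    fun hn => comonotonic_of_superlevel_subset_or_subset fun y =>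
      hn (π y) (δ y) (h.upper_mem_Icc y) (h.lower_mem_Icc y)⟩

/-- the two distributions of a cloud `(δ, π)` are comonotonic iff
the family of all sets `B_β = {x | π x > β}` and `C_β' = {x | δ x ≥ β'}`
(for `β, β' ∈ [0,1]`) is totally ordered by inclusion, i.e. any `B_β` and
`C_β'` are comparable. -/
theorem comonotonic_iff_nested [Fintype X] (δ π : X → ℝ) (h : IsCloud δ π) :
    Comonotonic δ π ↔
      ∀ β β' : ℝ, β ∈ Set.Icc (0 : ℝ) 1 → β' ∈ Set.Icc (0 : ℝ) 1 →
        ({x | β < π x} ⊆ {x | β' ≤ δ x} ∨ {x | β' ≤ δ x} ⊆ {x | β < π x}) :=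
  comonotonic_iff_nested_general δ π h
end

section
/- Let (F̲, F̄) be a generalized p-box on a finite set X = {x₁, …, xₙ}, indexed so that i ≤ j implies F̲(x_i) ≤ F̲(x_j) and F̄(x_i) ≤ F̄(x_j) (such an indexing exists by comonotonicity), with credal set 𝒫[F̲,F̄] = {p : for all i, F̲(x_i) ≤ P({x₁,…,x_i}) ≤ F̄(x_i)}. Define π = F̄ and δ by δ(x₁) = 0 and δ(x_i) = F̲(x_{i−1}) for i ≥ 2. Then (δ, π) is a comonotonic cloud on X and 𝒫[δ,π] = 𝒫[F̲,F̄]; hence every generalized p-box is representable by a comonotonic cloud. -/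
open Finset

attribute [local instance] Classical.propDecidable

variable {X : Type*}

/-!
On a chain, every sublevel set `{π ≤ α}` lies below its largest element `k`, where `π k ≤ α`;
conversely, for monotone `π`, `{x ≤ k} ⊆ {π ≤ π k}`. So for monotone `π` the cloud constraints
`P {π ≤ α} ≤ α` are equivalent to the constraints `P {x ≤ k} ≤ π k`, and dually the constraints
`P {α ≤ δ} ≤ 1 - α` to `P {k ≤ x} ≤ 1 - δ k`. With `π = F̄` the first family is the upper p-box
bound. With `δ xᵢ₊₁ = F̲ xᵢ`, the set `{xᵢ₊₁ ≤ x}` is the complement of `{x ≤ xᵢ}`, so the second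
family is the lower p-box bound.
-/

theorem one_sub_le_sum_filter_lt_iff [Fintype X] {p π : X → ℝ} (hp : ∑ x, p x = 1) (α : ℝ) :
    1 - α ≤ ∑ x ∈ univ.filter (fun x => α < π x), p x ↔
      ∑ x ∈ univ.filter (fun x => π x ≤ α), p x ≤ α := by
  have hsplit := sum_filter_add_sum_filter_not univ (fun x => α < π x) p
  simp only [not_lt, hp] at hsplit
  constructor <;> intro h <;> linarith

section Chain

variable [LinearOrder X]

theorem comonotonic_of_monotone {δ π : X → ℝ} (hδ : Monotone δ) (hπ : Monotone π) :
    Comonotonic δ π :=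
  fun _ _ h => hπ (hδ.reflect_lt h).le

/-- The paper's `δ xᵢ = F̲ xᵢ₋₁`, `δ x₁ = 0`, on an arbitrary chain. -/
structure IsShiftUp (F δ : X → ℝ) : Prop where
  eq_zero_of_isMin : ∀ j, IsMin j → δ j = 0
  eq_of_covBy : ∀ i j, i ⋖ j → δ j = F i

namespace IsShiftUp

variable [WellFoundedGT X] {F δ : X → ℝ}

theorem nonneg (h : IsShiftUp F δ) (hF : ∀ i, 0 ≤ F i) (j : X) : 0 ≤ δ j := by
  by_cases hj : IsMin j
  · exact (h.eq_zero_of_isMin j hj).ge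
  · obtain ⟨i, hij⟩ := exists_covBy_of_wellFoundedGT hj
    exact h.eq_of_covBy i j hij ▸ hF i

theorem le_self (h : IsShiftUp F δ) (hF : Monotone F) (hF0 : ∀ i, 0 ≤ F i) (j : X) :
    δ j ≤ F j := by
  by_cases hj : IsMin j
  · exact h.eq_zero_of_isMin j hj ▸ hF0 j
  · obtain ⟨i, hij⟩ := exists_covBy_of_wellFoundedGT hj
    exact h.eq_of_covBy i j hij ▸ hF hij.le

theorem monotone (h : IsShiftUp F δ) (hF : Monotone F) (hF0 : ∀ i, 0 ≤ F i) : Monotone δ := by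
  intro a b hab
  by_cases ha : IsMin a
  · exact h.eq_zero_of_isMin a ha ▸ h.nonneg hF0 b
  · obtain ⟨i, hia⟩ := exists_covBy_of_wellFoundedGT ha
    obtain ⟨i', hib⟩ := exists_covBy_of_wellFoundedGT fun hb => ha (hb.mono hab)
    rw [h.eq_of_covBy i a hia, h.eq_of_covBy i' b hib]
    exact hF (hib.le_of_lt (hia.lt.trans_le hab))

end IsShiftUp

variable [Fintype X]

theorem sum_filter_ge_eq_sub_of_covBy {i j : X} (hij : i ⋖ j) (p : X → ℝ) :
    ∑ x ∈ univ.filter (fun x => j ≤ x), p x =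
      ∑ x, p x - ∑ x ∈ univ.filter (fun x => x ≤ i), p x := by
  rw [← sum_filter_add_sum_filter_not univ (fun x => x ≤ i) p, add_sub_cancel_left]
  simp only [not_le, hij.le_iff_lt_right]

theorem IsShiftUp.forall_sum_filter_ge_le_iff {F δ p : X → ℝ} (h : IsShiftUp F δ)
    (hp : ∑ x, p x = 1) (hF : ∀ i, F i ≤ 1) :
    (∀ k, ∑ x ∈ univ.filter (fun x => k ≤ x), p x ≤ 1 - δ k) ↔
      ∀ i, F i ≤ ∑ x ∈ univ.filter (fun x => x ≤ i), p x := by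
  constructor
  · intro H i
    by_cases hi : IsMax i
    · simpa [filter_true_of_mem fun x _ => (isTop_iff_isMax.2 hi) x, hp] using hF i
    · obtain ⟨j, hij⟩ := exists_covBy_of_wellFoundedLT hi
      have hj := H j
      rw [sum_filter_ge_eq_sub_of_covBy hij, hp, h.eq_of_covBy i j hij] at hj
      linarith
  · intro H k
    by_cases hk : IsMin k
    · simp [filter_true_of_mem fun x _ => (isBot_iff_isMin.2 hk) x, hp, h.eq_zero_of_isMin k hk]
    · obtain ⟨i, hik⟩ := exists_covBy_of_wellFoundedGT hk
      rw [sum_filter_ge_eq_sub_of_covBy hik, hp, h.eq_of_covBy i k hik]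
      linarith [H i]

theorem forall_sum_sublevel_le_iff {p g : X → ℝ} (hp : ∀ x, 0 ≤ p x) (hg : Monotone g)
    (hg0 : ∀ x, 0 ≤ g x) (hg1 : ∀ x, g x ≤ 1) :
    (∀ β : ℝ, 0 ≤ β → β ≤ 1 → ∑ x ∈ univ.filter (fun x => g x ≤ β), p x ≤ β) ↔
      ∀ k, ∑ x ∈ univ.filter (fun x => x ≤ k), p x ≤ g k := by
  constructor
  · intro H k
    calc ∑ x ∈ univ.filter (fun x => x ≤ k), p x
        ≤ ∑ x ∈ univ.filter (fun x => g x ≤ g k), p x :=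
          sum_le_sum_of_subset_of_nonneg (monotone_filter_right _ fun _ _ hx => hg hx)
            fun x _ _ => hp x
      _ ≤ g k := H _ (hg0 k) (hg1 k)
  · intro H β hβ _
    set S := univ.filter (fun x => g x ≤ β)
    rcases S.eq_empty_or_nonempty with hS | hS
    · simpa [hS] using hβ
    · calc ∑ x ∈ S, p x ≤ ∑ x ∈ univ.filter (fun x => x ≤ S.max' hS), p x :=
            sum_le_sum_of_subset_of_nonneg
              (fun x hx => mem_filter.2 ⟨mem_univ x, S.le_max' x hx⟩) fun x _ _ => hp x
        _ ≤ g (S.max' hS) := H _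
        _ ≤ β := (mem_filter.1 (S.max'_mem hS)).2

theorem forall_sum_superlevel_le_one_sub_iff {p δ : X → ℝ} (hp : ∀ x, 0 ≤ p x)
    (hδ : Monotone δ) (hδ0 : ∀ x, 0 ≤ δ x) (hδ1 : ∀ x, δ x ≤ 1) :
    (∀ α : ℝ, 0 ≤ α → α ≤ 1 → ∑ x ∈ univ.filter (fun x => α ≤ δ x), p x ≤ 1 - α) ↔
      ∀ k, ∑ x ∈ univ.filter (fun x => k ≤ x), p x ≤ 1 - δ k := by
  -- the superlevel sets of `δ` are the sublevel sets of `1 - δ` on the dual order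
  have key := forall_sum_sublevel_le_iff (X := Xᵒᵈ) (p := fun x => p (OrderDual.ofDual x))
    (g := fun x => 1 - δ (OrderDual.ofDual x)) (fun x => hp _)
    (fun a b hab => sub_le_sub_left (hδ hab) 1) (fun x => by linarith [hδ1 (OrderDual.ofDual x)])
    (fun x => by linarith [hδ0 (OrderDual.ofDual x)])
  simp only [sub_le_comm (a := (1 : ℝ))] at key
  refine Iff.trans ⟨fun H β hβ0 hβ1 => ?_, fun H α hα0 hα1 => ?_⟩ key
  · have hβ := H (1 - β) (by linarith) (by linarith)
    rwa [sub_sub_cancel] at hβ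
  · have hα := H (1 - α) (by linarith) (by linarith)
    rwa [sub_sub_cancel] at hα

theorem mem_credalCloud_iff {δ π p : X → ℝ} (hδ : Monotone δ) (hπ : Monotone π)
    (hδ0 : ∀ x, 0 ≤ δ x) (hδπ : ∀ x, δ x ≤ π x) (hπ1 : ∀ x, π x ≤ 1) :
    p ∈ credalCloud δ π ↔ IsProbDist p ∧
      (∀ k, ∑ x ∈ univ.filter (fun x => k ≤ x), p x ≤ 1 - δ k) ∧
      ∀ k, ∑ x ∈ univ.filter (fun x => x ≤ k), p x ≤ π k := by
  simp only [credalCloud, Set.mem_ofPred_eq, imp_and, forall_and]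
  refine and_congr_right fun hp => ?_
  have hp0 : ∀ x, 0 ≤ p x := fun x => (hp.1 x).1
  simp only [one_sub_le_sum_filter_lt_iff hp.2]
  rw [forall_sum_superlevel_le_one_sub_iff hp0 hδ hδ0 fun x => (hδπ x).trans (hπ1 x),
    forall_sum_sublevel_le_iff hp0 hπ (fun x => (hδ0 x).trans (hδπ x)) hπ1]

end Chain

theorem isShiftUp_of_eq_dite {n : ℕ} {F δ : Fin n → ℝ}
    (hδ : ∀ i : Fin n, δ i = if h0 : i.val = 0 then 0 else F ⟨i.val - 1, by omega⟩) :
    IsShiftUp F δ where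
  eq_zero_of_isMin j hj := by
    rw [hδ, dif_pos]
    by_contra hj0
    exact hj.not_lt (show (⟨0, j.pos⟩ : Fin n) < j from Fin.lt_def.2 (Nat.pos_of_ne_zero hj0))
  eq_of_covBy i j hij := by
    rw [Fin.covBy_iff, Nat.covBy_iff_add_one_eq] at hij
    rw [hδ, dif_neg (by omega)]
    exact congrArg F (Fin.ext (show j.val - 1 = i.val by omega))

/-- a generalized p-box `(F̲, F̄)` on `X = {x₁, …, xₙ}` (indexed so
that both bounds are non-decreasing) is representable by the comonotonic cloud
`π = F̄`, `δ x₁ = 0` and `δ xᵢ = F̲ xᵢ₋₁` for `i ≥ 2`: the pair `(δ, π)` is a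
comonotonic cloud with the same credal set as the p-box. -/
theorem genpbox_is_comonotonic_cloud {n : ℕ} (Flow Fupp : Fin n → ℝ)
    (hbounds : ∀ i, 0 ≤ Flow i ∧ Fupp i ≤ 1) (hle : ∀ i, Flow i ≤ Fupp i)
    (hFlm : Monotone Flow) (hFum : Monotone Fupp)
    (hone : ∃ i, Flow i = 1 ∧ Fupp i = 1)
    (δ π : Fin n → ℝ) (hπ : π = Fupp)
    (hδ : ∀ i : Fin n, δ i = if h0 : i.val = 0 then 0
      else Flow ⟨i.val - 1, lt_trans (Nat.sub_lt (Nat.pos_of_ne_zero h0) Nat.one_pos) i.isLt⟩) :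
    IsCloud δ π ∧ Comonotonic δ π ∧
      credalCloud δ π =
        {p | IsProbDist p ∧ ∀ i : Fin n,
          Flow i ≤ ∑ j ∈ univ.filter (fun j => j ≤ i), p j ∧
          ∑ j ∈ univ.filter (fun j => j ≤ i), p j ≤ Fupp i} := by
  subst hπ
  obtain ⟨i₁, -, hi₁⟩ := hone
  have hFlow0 : ∀ i, 0 ≤ Flow i := fun i => (hbounds i).1
  have hπ1 : ∀ i, π i ≤ 1 := fun i => (hbounds i).2
  have hshift : IsShiftUp Flow δ := isShiftUp_of_eq_dite hδ
  have hδm : Monotone δ := hshift.monotone hFlm hFlow0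
  have hδ0 : ∀ i, 0 ≤ δ i := hshift.nonneg hFlow0
  have hδπ : ∀ i, δ i ≤ π i := fun i => (hshift.le_self hFlm hFlow0 i).trans (hle i)
  have hbot : IsMin (⟨0, i₁.pos⟩ : Fin n) := fun j _ => Fin.le_def.2 (Nat.zero_le _)
  refine ⟨⟨hδ0, hπ1, hδπ, ⟨i₁, hi₁⟩, ⟨_, hshift.eq_zero_of_isMin _ hbot⟩⟩,
    comonotonic_of_monotone hδm hFum, ?_⟩
  ext p
  rw [mem_credalCloud_iff hδm hFum hδ0 hδπ hπ1, Set.mem_ofPred_eq]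
  refine and_congr_right fun hp => ?_
  rw [hshift.forall_sum_filter_ge_le_iff hp.2 fun i => (hle i).trans (hπ1 i), ← forall_and]
  -- the two sides differ only in the `Decidable` instances of the filters
  convert Iff.rfl
end

section
/- Let (δ, π) be a comonotonic cloud on a finite set X, and let 0 = γ₀ < γ₁ < … < γ_M = 1 be the distinct elements of {0,1} ∪ δ(X) ∪ π(X). For j = 1, …, M set E_j = {x ∈ X : π(x) ≥ γ_j and δ(x) < γ_j}, and define the belief function Bel(A) = ∑_{j : E_j ⊆ A} (γ_j − γ_{j−1}) for A ⊆ X. Then the credal set of this belief function coincides with that of the cloud: {p : Bel(A) ≤ P(A) for all A ⊆ X} = 𝒫[δ,π]. In particular every comonotonic cloud is exactly representable by a random set. -/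
open Finset

attribute [local instance] Classical.propDecidable

variable {X : Type*}

/-! Because `δ` and `π` take values in the grid `γ`, every level set `{δ ≥ α}`, `{π > α}` is a
grid level set, so the cloud constraints reduce to `P(δ ≥ γ_k) ≤ 1 - γ_k` and
`P(π ≥ γ_{i+1}) ≥ 1 - γ_i`. Testing `Bel ≤ P` on `{δ < γ_k}` and on `{π ≥ γ_{i+1}}`, where the
masses of the focal sets contained in them telescope, gives exactly these constraints.
Conversely, comonotonicity makes the superlevel sets of `δ` and `π` nested. Adding the focal sets
`E_j ⊆ A` from the top level down then preserves
`P({π ≥ γ_k} \ A) + ∑_{j > k, E_j ⊆ A} (γ_j - γ_{j-1}) ≤ 1 - γ_k`, and `k = 0` is `Bel A ≤ P A`. -/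

theorem Fin.sum_Ici_sub {G : Type*} [AddCommGroup G] {n : ℕ} (a : Fin n)
    (f : Fin (n + 1) → G) :
    ∑ i ∈ Finset.Ici a, (f i.succ - f i.castSucc) = f (Fin.last n) - f a.castSucc := by
  cases n with
  | zero => exact a.elim0
  | succ n =>
    rw [← Finset.Icc_top, Fin.sum_Icc_sub le_top]
    rfl

theorem Fin.exists_castSucc_le_lt_succ {β : Type*} [LinearOrder β] {n : ℕ}
    {γ : Fin (n + 1) → β} {α : β} (h0 : γ 0 ≤ α) (hlast : α < γ (Fin.last n)) :
    ∃ i : Fin n, γ i.castSucc ≤ α ∧ α < γ i.succ := by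
  set S := univ.filter (fun k => γ k ≤ α)
  have hS : S.Nonempty := ⟨0, mem_filter.2 ⟨mem_univ _, h0⟩⟩
  obtain ⟨i, hi⟩ := Fin.exists_castSucc_eq.2 fun h : S.max' hS = Fin.last n =>
    (mem_filter.1 (h ▸ S.max'_mem hS)).2.not_gt hlast
  refine ⟨i, hi ▸ (mem_filter.1 (S.max'_mem hS)).2, lt_of_not_ge fun h => ?_⟩
  exact Fin.castSucc_lt_succ.not_ge (hi ▸ S.le_max' _ (mem_filter.2 ⟨mem_univ _, h⟩))

theorem StrictMono.apply_succ_le_of_apply_castSucc_lt {β : Type*} [LinearOrder β] {n : ℕ}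
    {γ : Fin (n + 1) → β} (hγ : StrictMono γ) {a : Fin n} {y : β} (hy : y ∈ Set.range γ)
    (h : γ a.castSucc < y) : γ a.succ ≤ y := by
  obtain ⟨j, rfl⟩ := hy
  exact hγ.monotone (Fin.castSucc_lt_iff_succ_le.1 (hγ.lt_iff_lt.1 h))

theorem Monotone.apply_zero_le_of_mem_range {β : Type*} [Preorder β] {n : ℕ}
    {γ : Fin (n + 1) → β} (hγ : Monotone γ) {y : β} (hy : y ∈ Set.range γ) : γ 0 ≤ y := by
  obtain ⟨j, rfl⟩ := hy
  exact hγ (Fin.zero_le j)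

noncomputable section

variable {M : ℕ} {δ π : X → ℝ} {γ : Fin (M + 1) → ℝ}

structure IsLevelGrid (γ : Fin (M + 1) → ℝ) (δ π : X → ℝ) : Prop where
  strictMono : StrictMono γ
  map_zero : γ 0 = 0
  map_last : γ (Fin.last M) = 1
  mem_range_left : ∀ x, δ x ∈ Set.range γ
  mem_range_right : ∀ x, π x ∈ Set.range γ

theorem IsLevelGrid.of_isCloud (h : IsCloud δ π)
    (hγ : StrictMono γ) (hrange : Set.range γ = {0, 1} ∪ Set.range δ ∪ Set.range π) :
    IsLevelGrid γ δ π := by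
  obtain ⟨hδ0, hπ1, hδπ, -, -⟩ := h
  have hunit : ∀ y ∈ Set.range γ, 0 ≤ y ∧ y ≤ 1 := by
    rw [hrange]
    rintro y (((rfl | rfl) | ⟨x, rfl⟩) | ⟨x, rfl⟩)
    · norm_num
    · norm_num
    · exact ⟨hδ0 x, (hδπ x).trans (hπ1 x)⟩
    · exact ⟨(hδ0 x).trans (hδπ x), hπ1 x⟩
  have hmem : ∀ y ∈ ({0, 1} : Set ℝ), y ∈ Set.range γ := fun y hy => by
    rw [hrange]; exact Or.inl (Or.inl hy)
  obtain ⟨i₀, hi₀⟩ := hmem 0 (by simp)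
  obtain ⟨i₁, hi₁⟩ := hmem 1 (by simp)
  refine ⟨hγ, le_antisymm ?_ (hunit _ ⟨0, rfl⟩).1, le_antisymm (hunit _ ⟨_, rfl⟩).2 ?_,
    fun x => ?_, fun x => ?_⟩
  · exact hi₀ ▸ hγ.monotone (Fin.zero_le i₀)
  · exact hi₁ ▸ hγ.monotone (Fin.le_last i₁)
  · rw [hrange]; exact Or.inl (Or.inr ⟨x, rfl⟩)
  · rw [hrange]; exact Or.inr ⟨x, rfl⟩

theorem IsLevelGrid.monotone (hg : IsLevelGrid γ δ π) : Monotone γ :=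
  hg.strictMono.monotone

theorem IsLevelGrid.mem_Icc (hg : IsLevelGrid γ δ π) (k : Fin (M + 1)) : γ k ∈ Set.Icc 0 1 :=
  ⟨hg.map_zero ▸ hg.monotone (Fin.zero_le k),
    hg.map_last ▸ hg.monotone (Fin.le_last k)⟩

variable [Fintype X]

def superlevel (f : X → ℝ) (c : ℝ) : Finset X :=
  univ.filter (fun x => c ≤ f x)

def focalSet (δ π : X → ℝ) (c : ℝ) : Finset X :=
  univ.filter (fun x => c ≤ π x ∧ δ x < c)

theorem sdiff_subset_superlevel_of_focalSet_subset {c : ℝ} {A : Finset X}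
    (hA : focalSet δ π c ⊆ A) : superlevel π c \ A ⊆ superlevel δ c := by
  intro x hx
  obtain ⟨hxπ, hxA⟩ := mem_sdiff.1 hx
  simp only [superlevel, focalSet, mem_filter, mem_univ, true_and] at hxπ hA ⊢
  exact le_of_not_gt fun hxδ => hxA (hA (mem_filter.2 ⟨mem_univ _, hxπ, hxδ⟩))

theorem Comonotonic.superlevel_total (h : Comonotonic δ π) (c d : ℝ) :
    superlevel δ c ⊆ superlevel π d ∨ superlevel π d ⊆ superlevel δ c := by
  rw [or_iff_not_imp_left, not_subset]
  rintro ⟨x, hxδ, hxπ⟩ y hy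
  simp only [superlevel, mem_filter, mem_univ, true_and, not_le] at hxδ hxπ hy ⊢
  exact le_of_not_gt fun hyδ => (h y x (hyδ.trans_le hxδ)).not_gt (hxπ.trans_le hy)

-- `i : Fin M` stands for the index `j = i + 1` of the statement, so no truncated `j - 1` occurs.
def belief (δ π : X → ℝ) (γ : Fin (M + 1) → ℝ) (A : Finset X) : ℝ :=
  ∑ i ∈ univ.filter (fun i : Fin M => focalSet δ π (γ i.succ) ⊆ A), (γ i.succ - γ i.castSucc)

theorem sum_pred_eq_belief (δ π : X → ℝ) (γ : Fin (M + 1) → ℝ) (A : Finset X) :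
    ∑ j ∈ univ.filter (fun j : Fin (M + 1) => j.val ≠ 0 ∧
          univ.filter (fun x => γ j ≤ π x ∧ δ x < γ j) ⊆ A),
        (γ j - γ ⟨j.val - 1, lt_of_le_of_lt (Nat.sub_le _ _) j.isLt⟩) = belief δ π γ A := by
  rw [belief, sum_filter, sum_filter, Fin.sum_univ_succ, if_neg (by simp), zero_add]
  exact sum_congr rfl fun i _ => if_congr (and_iff_right (Nat.succ_ne_zero i)) rfl rfl

theorem sum_le_belief (hγ : Monotone γ) {A : Finset X}
    {S : Finset (Fin M)} (hS : ∀ i ∈ S, focalSet δ π (γ i.succ) ⊆ A) :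
    ∑ i ∈ S, (γ i.succ - γ i.castSucc) ≤ belief δ π γ A :=
  sum_le_sum_of_subset_of_nonneg (fun i hi => mem_filter.2 ⟨mem_univ _, hS i hi⟩)
    fun i _ _ => sub_nonneg.2 (hγ (Fin.castSucc_le_succ i))

/-- The cloud constraints at the grid levels: `{δ ≥ α}` is a grid superlevel set of `δ`, and
for `γ_i ≤ α < γ_{i+1}` one has `{π > α} = {π ≥ γ_{i+1}}`. -/
def LevelBounds (p δ π : X → ℝ) (γ : Fin (M + 1) → ℝ) : Prop :=
  (∀ k, ∑ x ∈ superlevel δ (γ k), p x ≤ 1 - γ k) ∧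
    ∀ i : Fin M, 1 - γ i.castSucc ≤ ∑ x ∈ superlevel π (γ i.succ), p x

theorem levelBounds_of_belief_le
    (hg : IsLevelGrid γ δ π) {p : X → ℝ} (hp : IsProbDist p)
    (hBel : ∀ A, belief δ π γ A ≤ ∑ x ∈ A, p x) : LevelBounds p δ π γ := by
  have hmono := hg.monotone
  refine ⟨fun k => ?_, fun a => ?_⟩
  · have hsplit := sum_sdiff (subset_univ (superlevel δ (γ k))) (f := p)
    rw [hp.2] at hsplit
    cases k using Fin.cases with
    | zero =>
      linarith [hg.map_zero, sum_nonneg fun x (_ : x ∈ univ \ superlevel δ (γ 0)) => (hp.1 x).1]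
    | succ b =>
      have hb := (sum_le_belief hmono (S := Finset.Iic b) fun i hi x hx => ?_).trans
        (hBel (univ \ superlevel δ (γ b.succ)))
      · rw [Fin.sum_Iic_sub, hg.map_zero] at hb
        linarith
      · simp only [focalSet, superlevel, mem_filter, mem_sdiff, mem_univ, true_and,
          not_le] at hx ⊢
        exact hx.2.trans_le (hmono (Fin.succ_le_succ_iff.2 (mem_Iic.1 hi)))
  · have ha := (sum_le_belief hmono (S := Finset.Ici a) fun i hi x hx => ?_).trans
      (hBel (superlevel π (γ a.succ)))
    · rwa [Fin.sum_Ici_sub, hg.map_last] at ha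
    · simp only [focalSet, superlevel, mem_filter, mem_univ, true_and] at hx ⊢
      exact (hmono (Fin.succ_le_succ_iff.2 (mem_Ici.1 hi))).trans hx.1

theorem levelBounds_of_mem_credalCloud (hg : IsLevelGrid γ δ π) {p : X → ℝ}
    (h : p ∈ credalCloud δ π) : LevelBounds p δ π γ := by
  obtain ⟨hp, hcloud⟩ := h
  refine ⟨fun k => (hcloud (γ k) (hg.mem_Icc k).1 (hg.mem_Icc k).2).1, fun a => ?_⟩
  have hgap : γ a.castSucc < γ a.succ := hg.strictMono Fin.castSucc_lt_succ
  -- `{π > α} ⊆ {π ≥ γ_{a+1}}` for `α ∈ (γ_a, γ_{a+1})`; let `α` decrease to `γ_a`.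
  by_contra! hlt
  obtain ⟨α, hα, hα'⟩ := _root_.exists_between (lt_min (lt_sub_comm.1 hlt) hgap)
  have hsub : univ.filter (fun x => α < π x) ⊆ superlevel π (γ a.succ) := fun x hx =>
    mem_filter.2 ⟨mem_univ _, hg.strictMono.apply_succ_le_of_apply_castSucc_lt
      (hg.mem_range_right x) (hα.trans (mem_filter.1 hx).2)⟩
  have hα_lower := (hcloud α ((hg.mem_Icc _).1.trans hα.le)
    (hα'.le.trans ((min_le_right _ _).trans (hg.mem_Icc _).2))).2
  linarith [sum_le_sum_of_subset_of_nonneg hsub fun x _ _ => (hp.1 x).1,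
    min_le_left (1 - ∑ x ∈ superlevel π (γ a.succ), p x) (γ a.succ)]

theorem mem_credalCloud_of_levelBounds (hg : IsLevelGrid γ δ π) {p : X → ℝ}
    (hp : IsProbDist p) (hb : LevelBounds p δ π γ) : p ∈ credalCloud δ π := by
  refine ⟨hp, fun α hα0 hα1 => ⟨?_, ?_⟩⟩
  · obtain ⟨k, hk, hmin⟩ := exists_min_image (univ.filter fun k => α ≤ γ k) γ
      ⟨Fin.last M, mem_filter.2 ⟨mem_univ _, hg.map_last ▸ hα1⟩⟩
    have hsub : univ.filter (fun x => α ≤ δ x) ⊆ superlevel δ (γ k) := fun x hx => by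
      obtain ⟨j, hj⟩ := hg.mem_range_left x
      refine mem_filter.2 ⟨mem_univ _, hj ▸ hmin j (mem_filter.2 ⟨mem_univ _, ?_⟩)⟩
      exact hj ▸ (mem_filter.1 hx).2
    linarith [hb.1 k, (mem_filter.1 hk).2,
      sum_le_sum_of_subset_of_nonneg hsub fun x _ _ => (hp.1 x).1]
  · rcases lt_or_ge α 1 with hα | hα
    · obtain ⟨i, hi, hi'⟩ := Fin.exists_castSucc_le_lt_succ (hg.map_zero ▸ hα0)
        (hg.map_last ▸ hα)
      have hsub : superlevel π (γ i.succ) ⊆ univ.filter (fun x => α < π x) := fun x hx =>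
        mem_filter.2 ⟨mem_univ _, hi'.trans_le (mem_filter.1 hx).2⟩
      linarith [hb.2 i, sum_le_sum_of_subset_of_nonneg hsub fun x _ _ => (hp.1 x).1]
    · linarith [sum_nonneg fun x (_ : x ∈ univ.filter (fun x => α < π x)) => (hp.1 x).1]

theorem sum_sdiff_superlevel_add_sum_le
    (hg : IsLevelGrid γ δ π) (hcom : Comonotonic δ π) {p : X → ℝ} (hp : ∀ x, 0 ≤ p x)
    (hb : LevelBounds p δ π γ) (A : Finset X) (s : Finset (Fin M))
    (hs : ∀ i ∈ s, focalSet δ π (γ i.succ) ⊆ A) (k : Fin (M + 1))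
    (hks : ∀ i ∈ s, k ≤ i.castSucc) (hk : focalSet δ π (γ k) ⊆ A) :
    ∑ x ∈ superlevel π (γ k) \ A, p x + ∑ i ∈ s, (γ i.succ - γ i.castSucc) ≤ 1 - γ k := by
  induction s using Finset.induction_on_min generalizing k with
  | empty =>
    rw [sum_empty, add_zero]
    exact (sum_le_sum_of_subset_of_nonneg (sdiff_subset_superlevel_of_focalSet_subset hk)
      fun x _ _ => hp x).trans (hb.1 k)
  | insert a s has ih =>
    have ha : focalSet δ π (γ a.succ) ⊆ A := hs a (mem_insert_self a s)
    have ih' := ih (fun i hi => hs i (mem_insert_of_mem hi)) a.succ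
      (fun i hi => Fin.succ_le_castSucc_iff.2 (has i hi)) ha
    have hka : k ≤ a.castSucc := hks a (mem_insert_self a s)
    set U := superlevel π (γ a.succ)
    set D := superlevel δ (γ k)
    have hcover : superlevel π (γ k) \ A ⊆ (U \ A) ∪ (D \ U) := fun x hx => by
      by_cases hxU : x ∈ U
      · exact mem_union_left _ (mem_sdiff.2 ⟨hxU, (mem_sdiff.1 hx).2⟩)
      · exact mem_union_right _
          (mem_sdiff.2 ⟨sdiff_subset_superlevel_of_focalSet_subset hk hx, hxU⟩)
    have hstep : ∑ x ∈ superlevel π (γ k) \ A, p x ≤ ∑ x ∈ U \ A, p x + ∑ x ∈ D \ U, p x := by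
      rw [← sum_union (disjoint_sdiff.mono_left sdiff_subset)]
      exact sum_le_sum_of_subset_of_nonneg hcover fun x _ _ => hp x
    have hcross : ∑ x ∈ D \ U, p x ≤ γ a.castSucc - γ k := by
      rcases hcom.superlevel_total (γ k) (γ a.succ) with hDU | hUD
      · rw [sdiff_eq_empty_iff_subset.2 hDU, sum_empty]
        exact sub_nonneg.2 (hg.monotone hka)
      · rw [sum_sdiff_eq_sub hUD]
        linarith [hb.1 k, hb.2 a]
    rw [sum_insert fun h => lt_irrefl a (has a h)]
    linarith

theorem belief_le_of_levelBounds
    (hg : IsLevelGrid γ δ π) (hcom : Comonotonic δ π) {p : X → ℝ} (hp : IsProbDist p)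
    (hb : LevelBounds p δ π γ) (A : Finset X) : belief δ π γ A ≤ ∑ x ∈ A, p x := by
  have hzero : ∀ {f : X → ℝ}, (∀ x, f x ∈ Set.range γ) → ∀ x, γ 0 ≤ f x :=
    fun hf x => hg.monotone.apply_zero_le_of_mem_range (hf x)
  have hU : superlevel π (γ 0) = univ :=
    eq_univ_of_forall fun x => mem_filter.2 ⟨mem_univ _, hzero hg.mem_range_right x⟩
  have hE : focalSet δ π (γ 0) ⊆ A := fun x hx =>
    absurd (hzero hg.mem_range_left x) (not_le.2 (mem_filter.1 hx).2.2)
  have key := sum_sdiff_superlevel_add_sum_le hg hcom (fun x => (hp.1 x).1) hb A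
    (univ.filter fun i : Fin M => focalSet δ π (γ i.succ) ⊆ A) (fun i hi => (mem_filter.1 hi).2)
    0 (fun i _ => Fin.zero_le _) hE
  have hsplit := sum_sdiff (subset_univ A) (f := p)
  rw [hU, hg.map_zero] at key
  rw [hp.2] at hsplit
  rw [belief]
  linarith

end

/-- let `(δ, π)` be a comonotonic cloud and let
`0 = γ₀ < γ₁ < … < γ_M = 1` enumerate the distinct values of
`{0,1} ∪ δ(X) ∪ π(X)`. The random set with focal sets
`E_j = {x | π x ≥ γ_j ∧ δ x < γ_j}` and masses `γ_j - γ_{j-1}` (for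
`j = 1, …, M`) has belief function `Bel`, and its credal set coincides with the
credal set of the cloud. -/
theorem comonotonic_cloud_eq_random_set [Fintype X] (δ π : X → ℝ)
    (h : IsCloud δ π) (hcom : Comonotonic δ π)
    {M : ℕ} (γ : Fin (M + 1) → ℝ) (hγ : StrictMono γ)
    (hrange : Set.range γ = {0, 1} ∪ Set.range δ ∪ Set.range π)
    (Bel : Finset X → ℝ)
    (hBel : ∀ A : Finset X, Bel A =
      ∑ j ∈ univ.filter (fun j : Fin (M + 1) => j.val ≠ 0 ∧
          univ.filter (fun x => γ j ≤ π x ∧ δ x < γ j) ⊆ A),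
        (γ j - γ ⟨j.val - 1, lt_of_le_of_lt (Nat.sub_le _ _) j.isLt⟩)) :
    {p : X → ℝ | IsProbDist p ∧ ∀ A : Finset X, Bel A ≤ ∑ x ∈ A, p x} =
      credalCloud δ π := by
  have hg := IsLevelGrid.of_isCloud h hγ hrange
  obtain rfl : Bel = belief δ π γ := funext fun A => (hBel A).trans (sum_pred_eq_belief δ π γ A)
  ext p
  exact ⟨fun ⟨hp, hBel⟩ =>
      mem_credalCloud_of_levelBounds hg hp (levelBounds_of_belief_le hg hp hBel),
    fun hc => ⟨hc.1, belief_le_of_levelBounds hg hcom hc.1 (levelBounds_of_mem_credalCloud hg hc)⟩⟩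
end

section
/- Let (δ, π) be a cloud on a finite set X. For A ⊆ X define the possibility measure Π_π(A) = max_{x∈A} π(x) (with Π_π(∅) = 0) and the necessity measure N_π(A) = 1 − Π_π(X∖A), and define Π_{1−δ} and N_{1−δ} analogously from the possibility distribution x ↦ 1 − δ(x). Then every p ∈ 𝒫[δ,π] satisfies, for every event A ⊆ X: max(N_π(A), N_{1−δ}(A)) ≤ P(A) ≤ min(Π_π(A), Π_{1−δ}(A)). -/
open Finset

attribute [local instance] Classical.propDecidable

variable {X : Type*}

/-- The possibility measure of an event `A` induced by a distribution `π`
(`sSup ∅ = 0` in `ℝ`, matching the convention `Π(∅) = 0`). -/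
noncomputable def possM [Fintype X] (π : X → ℝ) (A : Finset X) : ℝ :=
  sSup (π '' ↑A)

/-- The necessity measure of an event `A` induced by a distribution `π`. -/
noncomputable def necM [Fintype X] (π : X → ℝ) (A : Finset X) : ℝ :=
  1 - possM π Aᶜ

/-!
A distribution `p` in the credal set puts mass at least `1 - α` on `{π > α}` and at most
`1 - α` on `{δ ≥ α}`. Taking `α = max_A π` (so that `A` misses `{π > α}`), respectively
`α = min_A δ` (so that `A ⊆ {δ ≥ α}`), bounds `P(A)` by both possibility measures; the
necessity bounds follow by passing to the complement, since `P(A) = 1 - P(Aᶜ)`.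
-/

lemma le_possM [Fintype X] (π : X → ℝ) {A : Finset X} {x : X} (hx : x ∈ A) :
    π x ≤ possM π A :=
  le_csSup (A.finite_toSet.image π).bddAbove ⟨x, hx, rfl⟩

lemma possM_empty [Fintype X] (π : X → ℝ) : possM π ∅ = 0 := by
  simp [possM]

namespace IsProbDist

variable [Fintype X] {p : X → ℝ}

lemma sum_add_sum_le_one (hp : IsProbDist p) {A B : Finset X} (hAB : Disjoint A B) :
    ∑ x ∈ A, p x + ∑ x ∈ B, p x ≤ 1 := by
  rw [← sum_union hAB, ← hp.2]
  exact sum_le_sum_of_subset_of_nonneg (subset_univ _) fun x _ _ => (hp.1 x).1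

lemma sum_compl (hp : IsProbDist p) (A : Finset X) :
    ∑ x ∈ Aᶜ, p x = 1 - ∑ x ∈ A, p x := by
  rw [← hp.2, ← sum_add_sum_compl A p, add_sub_cancel_left]

lemma necM_le_sum (hp : IsProbDist p) {π : X → ℝ} (hπ : ∀ B, ∑ x ∈ B, p x ≤ possM π B)
    (A : Finset X) : necM π A ≤ ∑ x ∈ A, p x := by
  have := hπ Aᶜ
  rw [hp.sum_compl] at this
  rw [necM]
  linarith

end IsProbDist

section credalCloud

variable [Fintype X] {δ π p : X → ℝ}

lemma sum_le_possM_of_mem_credalCloud (hπ₀ : ∀ x, 0 ≤ π x) (hπ₁ : ∀ x, π x ≤ 1)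
    (hp : p ∈ credalCloud δ π) (A : Finset X) : ∑ x ∈ A, p x ≤ possM π A := by
  rcases A.eq_empty_or_nonempty with rfl | hA
  · simp [possM_empty]
  obtain ⟨x₁, hx₁, hmax⟩ := A.exists_max_image π hA
  have hdisj : Disjoint A (univ.filter fun x => π x₁ < π x) :=
    disjoint_left.2 fun x hx hx' => (mem_filter.1 hx').2.not_ge (hmax x hx)
  calc ∑ x ∈ A, p x
      ≤ 1 - ∑ x ∈ univ.filter (fun x => π x₁ < π x), p x := by
        linarith [hp.1.sum_add_sum_le_one hdisj]
    _ ≤ π x₁ := by linarith [(hp.2 _ (hπ₀ x₁) (hπ₁ x₁)).2]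
    _ ≤ possM π A := le_possM π hx₁

lemma sum_le_possM_one_sub_of_mem_credalCloud (hδ₀ : ∀ x, 0 ≤ δ x) (hδ₁ : ∀ x, δ x ≤ 1)
    (hp : p ∈ credalCloud δ π) (A : Finset X) :
    ∑ x ∈ A, p x ≤ possM (fun x => 1 - δ x) A := by
  rcases A.eq_empty_or_nonempty with rfl | hA
  · simp [possM_empty]
  obtain ⟨x₀, hx₀, hmin⟩ := A.exists_min_image δ hA
  calc ∑ x ∈ A, p x
      ≤ ∑ x ∈ univ.filter (fun x => δ x₀ ≤ δ x), p x :=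
        sum_le_sum_of_subset_of_nonneg (fun x hx => mem_filter.2 ⟨mem_univ x, hmin x hx⟩)
          fun x _ _ => (hp.1.1 x).1
    _ ≤ 1 - δ x₀ := (hp.2 _ (hδ₀ x₀) (hδ₁ x₀)).1
    _ ≤ possM (fun x => 1 - δ x) A := le_possM (fun x => 1 - δ x) hx₀

end credalCloud

/-- every probability distribution in the credal set of a cloud
`(δ, π)` is bounded on every event by the necessity and possibility measures of
the two possibility distributions `π` and `1 - δ`. -/
theorem cloud_outer_approx_bounds [Fintype X] (δ π : X → ℝ) (h : IsCloud δ π)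
    (p : X → ℝ) (hp : p ∈ credalCloud δ π) (A : Finset X) :
    max (necM π A) (necM (fun x => 1 - δ x) A) ≤ ∑ x ∈ A, p x ∧
    ∑ x ∈ A, p x ≤ min (possM π A) (possM (fun x => 1 - δ x) A) := by
  obtain ⟨hδ₀, hπ₁, hδπ, -, -⟩ := h
  have hπ : ∀ B, ∑ x ∈ B, p x ≤ possM π B :=
    sum_le_possM_of_mem_credalCloud (fun x => (hδ₀ x).trans (hδπ x)) hπ₁ hp
  have hδ : ∀ B, ∑ x ∈ B, p x ≤ possM (fun x => 1 - δ x) B :=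
    sum_le_possM_one_sub_of_mem_credalCloud hδ₀ (fun x => (hδπ x).trans (hπ₁ x)) hp
  exact ⟨max_le (hp.1.necM_le_sum hπ A) (hp.1.necM_le_sum hδ A), le_min (hπ A) (hδ A)⟩
end

section
/- Let (δ, π) be any cloud on a finite set X (not necessarily comonotonic), and let 0 = γ₀ < γ₁ < … < γ_M = 1 be the distinct elements of {0,1} ∪ δ(X) ∪ π(X). For j = 1, …, M set E_j = {x ∈ X : π(x) ≥ γ_j and δ(x) < γ_j}, and define the belief function Bel(A) = ∑_{j : E_j ⊆ A} (γ_j − γ_{j−1}) for A ⊆ X. Then the credal set of this belief function is an inner approximation of that of the cloud: {p : Bel(A) ≤ P(A) for all A ⊆ X} ⊆ 𝒫[δ,π]. -/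
/-!
Each focal set `E_j` lies in `{δ < γ_j}` and in `{γ_j ≤ π}`, and the masses telescope. Given `α`,
let `m` be the least index with `α ≤ γ_m`; since every value of `δ` is some `γ_i`, `{δ < γ_j} ⊆ {δ < α}`
for `j ≤ m`, so `P(δ < α) ≥ Bel(δ < α) ≥ γ_m - γ_0 ≥ α`. Let `k` be the greatest index with
`γ_k ≤ α`; then `{γ_j ≤ π} ⊆ {α < π}` for `j > k`, so `P(α < π) ≥ Bel(α < π) ≥ γ_M - γ_k ≥ 1 - α`.
-/

open Finset

attribute [local instance] Classical.propDecidable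

variable {X : Type*}

theorem Finset.sum_Ioc_sub_pred {G : Type*} [AddCommGroup G] (f : ℕ → G) {a b : ℕ} (hab : a ≤ b) :
    ∑ i ∈ Ioc a b, (f i - f (i - 1)) = f b - f a := by
  induction b, hab using Nat.le_induction with
  | base => simp
  | succ b hab ih =>
    rw [sum_Ioc_succ_top hab, ih, Nat.add_sub_cancel]
    abel

theorem Fin.sum_Ioc_sub_pred {G : Type*} [AddCommGroup G] {M : ℕ} (γ : Fin (M + 1) → G)
    {a b : Fin (M + 1)} (hab : a ≤ b) :
    ∑ j ∈ Ioc a b, (γ j - γ ⟨j.val - 1, lt_of_le_of_lt (Nat.sub_le _ _) j.isLt⟩) = γ b - γ a := by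
  have hclamp : ∀ j : Fin (M + 1), ∀ n (hn : n ≤ j.val),
      γ (Fin.clamp n M) = γ ⟨n, hn.trans_lt j.isLt⟩ :=
    fun j n hn => congrArg γ (Fin.ext (by simp only [Fin.clamp]; omega))
  have key := Finset.sum_Ioc_sub_pred (fun n => γ (Fin.clamp n M)) (Fin.le_def.mp hab)
  rw [← Fin.map_valEmbedding_Ioc, sum_map] at key
  simp only [Fin.valEmbedding_apply] at key
  rw [hclamp b b le_rfl, hclamp a a le_rfl] at key
  rw [← key]
  refine sum_congr rfl fun j _ => ?_
  rw [hclamp j j le_rfl, hclamp j (j - 1) (Nat.sub_le _ _)]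

section StepBelief

variable {M : ℕ} (γ : Fin (M + 1) → ℝ)

/-- The belief function of the random set with focal sets `E j` and masses `γ j - γ (j - 1)`. -/
noncomputable def stepBel (E : Fin (M + 1) → Finset X) (A : Finset X) : ℝ :=
  ∑ j ∈ univ.filter (fun j : Fin (M + 1) => j.val ≠ 0 ∧ E j ⊆ A),
    (γ j - γ ⟨j.val - 1, lt_of_le_of_lt (Nat.sub_le _ _) j.isLt⟩)

variable {γ}

theorem sub_le_stepBel (hγ : Monotone γ) {E : Fin (M + 1) → Finset X} {A : Finset X}
    {a b : Fin (M + 1)} (hab : a ≤ b) (hE : ∀ j ∈ Ioc a b, E j ⊆ A) :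
    γ b - γ a ≤ stepBel γ E A := by
  rw [← Fin.sum_Ioc_sub_pred γ hab]
  refine sum_le_sum_of_subset_of_nonneg (fun j hj => ?_) fun j _ _ => ?_
  · have hj' := mem_Ioc.mp hj
    exact mem_filter.mpr ⟨mem_univ j, by omega, hE j hj⟩
  · exact sub_nonneg.mpr (hγ (Fin.le_def.mpr (Nat.sub_le _ _)))

variable {E : Fin (M + 1) → Finset X} {p : X → ℝ} {α : ℝ}

theorem sum_filter_le_le_one_sub [Fintype X] {δ : X → ℝ} (hγ : Monotone γ)
    (hp : ∑ x, p x = 1) (hBel : ∀ A, stepBel γ E A ≤ ∑ x ∈ A, p x)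
    (hE : ∀ j, ∀ x ∈ E j, δ x < γ j) (hδ : ∀ x, δ x ∈ Set.range γ) (h0 : γ 0 ≤ 0)
    (hα : α ≤ γ (Fin.last M)) :
    ∑ x ∈ univ.filter (fun x => α ≤ δ x), p x ≤ 1 - α := by
  obtain ⟨m, hαm, hm⟩ := exists_min_image (univ.filter (fun j => α ≤ γ j)) id
    ⟨Fin.last M, mem_filter.mpr ⟨mem_univ _, hα⟩⟩
  simp only [mem_filter, mem_univ, true_and, id] at hαm hm
  have hfocal : ∀ j ∈ Ioc 0 m, E j ⊆ univ.filter (fun x => ¬ α ≤ δ x) := by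
    intro j hj x hx
    obtain ⟨i, hi⟩ := hδ x
    have him : i < m := hγ.reflect_lt (hi ▸ (hE j x hx).trans_le (hγ (mem_Ioc.mp hj).2))
    exact mem_filter.mpr ⟨mem_univ x, hi ▸ fun hαi => (hm i hαi).not_gt him⟩
  have hlow := (sub_le_stepBel hγ (Fin.zero_le m) hfocal).trans (hBel _)
  have hsplit := sum_filter_add_sum_filter_not univ (fun x => α ≤ δ x) p
  linarith

theorem one_sub_le_sum_filter_lt [Fintype X] {π : X → ℝ} (hγ : Monotone γ)
    (hBel : ∀ A, stepBel γ E A ≤ ∑ x ∈ A, p x) (hE : ∀ j, ∀ x ∈ E j, γ j ≤ π x)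
    (h1 : 1 ≤ γ (Fin.last M)) (hα : γ 0 ≤ α) :
    1 - α ≤ ∑ x ∈ univ.filter (fun x => α < π x), p x := by
  obtain ⟨k, hkα, hk⟩ := exists_max_image (univ.filter (fun j => γ j ≤ α)) id
    ⟨0, mem_filter.mpr ⟨mem_univ _, hα⟩⟩
  simp only [mem_filter, mem_univ, true_and, id] at hkα hk
  have hfocal : ∀ j ∈ Ioc k (Fin.last M), E j ⊆ univ.filter (fun x => α < π x) := by
    intro j hj x hx
    have hαj : α < γ j := lt_of_not_ge fun hjα => (hk j hjα).not_gt (mem_Ioc.mp hj).1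
    exact mem_filter.mpr ⟨mem_univ x, hαj.trans_le (hE j x hx)⟩
  have hup := (sub_le_stepBel hγ (Fin.le_last k) hfocal).trans (hBel _)
  linarith

end StepBelief

theorem cloud_random_set_inner_approx_general [Fintype X] (δ π : X → ℝ)
    {M : ℕ} (γ : Fin (M + 1) → ℝ) (hγ : StrictMono γ)
    (hrange : Set.range γ = {0, 1} ∪ Set.range δ ∪ Set.range π)
    (Bel : Finset X → ℝ)
    (hBel : ∀ A : Finset X, Bel A =
      ∑ j ∈ univ.filter (fun j : Fin (M + 1) => j.val ≠ 0 ∧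
          univ.filter (fun x => γ j ≤ π x ∧ δ x < γ j) ⊆ A),
        (γ j - γ ⟨j.val - 1, lt_of_le_of_lt (Nat.sub_le _ _) j.isLt⟩)) :
    {p : X → ℝ | IsProbDist p ∧ ∀ A : Finset X, Bel A ≤ ∑ x ∈ A, p x} ⊆
      credalCloud δ π := by
  rintro p ⟨hp, hpBel⟩
  set E : Fin (M + 1) → Finset X := fun j => univ.filter (fun x => γ j ≤ π x ∧ δ x < γ j)
  have hstepBel : ∀ A, stepBel γ E A ≤ ∑ x ∈ A, p x := fun A => (hBel A).symm.trans_le (hpBel A)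
  have hmem : ∀ a ∈ ({0, 1} ∪ Set.range δ ∪ Set.range π : Set ℝ), a ∈ Set.range γ :=
    fun a ha => hrange ▸ ha
  obtain ⟨i₀, hi₀⟩ := hmem 0 (by simp)
  obtain ⟨i₁, hi₁⟩ := hmem 1 (by simp)
  have h0 : γ 0 ≤ 0 := hi₀ ▸ hγ.monotone (Fin.zero_le i₀)
  have h1 : 1 ≤ γ (Fin.last M) := hi₁ ▸ hγ.monotone (Fin.le_last i₁)
  refine ⟨hp, fun α hα0 hα1 => ⟨?_, ?_⟩⟩
  · exact sum_filter_le_le_one_sub hγ.monotone hp.2 hstepBel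
      (fun j x hx => (mem_filter.mp hx).2.2) (fun x => hmem _ (by simp)) h0 (hα1.trans h1)
  · exact one_sub_le_sum_filter_lt hγ.monotone hstepBel
      (fun j x hx => (mem_filter.mp hx).2.1) h1 (h0.trans hα0)

/-- let `(δ, π)` be any cloud (not necessarily comonotonic), and
let `0 = γ₀ < γ₁ < … < γ_M = 1` enumerate the distinct values of
`{0,1} ∪ δ(X) ∪ π(X)`. The random set with focal sets
`E_j = {x | π x ≥ γ_j ∧ δ x < γ_j}` and masses `γ_j - γ_{j-1}` (for
`j = 1, …, M`) has belief function `Bel`, and its credal set is an inner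
approximation of the credal set of the cloud. -/
theorem cloud_random_set_inner_approx [Fintype X] (δ π : X → ℝ)
    (h : IsCloud δ π)
    {M : ℕ} (γ : Fin (M + 1) → ℝ) (hγ : StrictMono γ)
    (hrange : Set.range γ = {0, 1} ∪ Set.range δ ∪ Set.range π)
    (Bel : Finset X → ℝ)
    (hBel : ∀ A : Finset X, Bel A =
      ∑ j ∈ univ.filter (fun j : Fin (M + 1) => j.val ≠ 0 ∧
          univ.filter (fun x => γ j ≤ π x ∧ δ x < γ j) ⊆ A),
        (γ j - γ ⟨j.val - 1, lt_of_le_of_lt (Nat.sub_le _ _) j.isLt⟩)) :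
    {p : X → ℝ | IsProbDist p ∧ ∀ A : Finset X, Bel A ≤ ∑ x ∈ A, p x} ⊆
      credalCloud δ π :=
  cloud_random_set_inner_approx_general δ π γ hγ hrange Bel hBel
end

section
/- Let (δ, π) be a cloud on ℝ with δ and π continuous. If a Borel probability measure P on ℝ satisfies P(A) ≥ λ*({α ∈ (0,1] : E_α ⊆ A}) for every Borel set A ⊆ ℝ, where E_α = {r ∈ ℝ : π(r) ≥ α and δ(r) < α} and λ* is Lebesgue outer measure, then P belongs to 𝒫[δ,π]. In other words, the continuous random set with uniform mass density on α ∈ (0,1] and focal sets E_α defines a credal set that inner-approximates the credal set of the cloud. -/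
/-!
Every focal set `E_β` with `β ≤ α` lies in `{δ < α}` and every one with `β > α` lies in
`{π > α}`. Since the levels are uniformly distributed on `(0, 1]`, dominating the belief function
gives `P {δ < α} ≥ α` and `P {π > α} ≥ 1 - α`; the first bound passes to the complement
`{α ≤ δ}`, and continuity makes both sets Borel.
-/

open MeasureTheory Set

def cloudFocalSet (δ π : ℝ → ℝ) (α : ℝ) : Set ℝ := {r | α ≤ π r ∧ δ r < α}

lemma cloudFocalSet_subset_setOf_lt_of_le {δ π : ℝ → ℝ} {α β : ℝ} (h : β ≤ α) :
    cloudFocalSet δ π β ⊆ {r | δ r < α} :=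
  fun _ hr => hr.2.trans_le h

lemma cloudFocalSet_subset_setOf_lt_of_lt {δ π : ℝ → ℝ} {α β : ℝ} (h : α < β) :
    cloudFocalSet δ π β ⊆ {r | α < π r} :=
  fun _ hr => h.trans_le hr.1

lemma ofReal_sub_le_of_focal_subset {E : ℝ → Set ℝ} {P : Measure ℝ}
    (hP : ∀ A : Set ℝ, MeasurableSet A → volume {α | α ∈ Ioc (0 : ℝ) 1 ∧ E α ⊆ A} ≤ P A)
    {A : Set ℝ} (hA : MeasurableSet A) {a b : ℝ} (hab : Ioc a b ⊆ Ioc 0 1)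
    (hE : ∀ β ∈ Ioc a b, E β ⊆ A) : ENNReal.ofReal (b - a) ≤ P A :=
  calc ENNReal.ofReal (b - a) = volume (Ioc a b) := Real.volume_Ioc.symm
    _ ≤ volume {α | α ∈ Ioc (0 : ℝ) 1 ∧ E α ⊆ A} := measure_mono fun β hβ => ⟨hab hβ, hE β hβ⟩
    _ ≤ P A := hP A hA

lemma prob_compl_le_ofReal_one_sub {Ω : Type*} [MeasurableSpace Ω] {P : Measure Ω}
    [IsProbabilityMeasure P] {s : Set Ω} (hs : MeasurableSet s) {a : ℝ} (ha : 0 ≤ a)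
    (h : ENNReal.ofReal a ≤ P s) : P sᶜ ≤ ENNReal.ofReal (1 - a) := by
  rw [prob_compl_eq_one_sub hs, ENNReal.ofReal_sub _ ha, ENNReal.ofReal_one]
  exact tsub_le_tsub_left h 1

theorem continuous_cloud_random_set_inner_approx_general (δ π : ℝ → ℝ)
    (hδc : Continuous δ) (hπc : Continuous π)
    (P : Measure ℝ) [IsProbabilityMeasure P]
    (hP : ∀ A : Set ℝ, MeasurableSet A →
      volume {α : ℝ | α ∈ Set.Ioc (0 : ℝ) 1 ∧ {r : ℝ | α ≤ π r ∧ δ r < α} ⊆ A} ≤ P A) :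
    ∀ α : ℝ, 0 ≤ α → α ≤ 1 →
      P {r : ℝ | α ≤ δ r} ≤ ENNReal.ofReal (1 - α) ∧
      ENNReal.ofReal (1 - α) ≤ P {r : ℝ | α < π r} := by
  intro α hα0 hα1
  have hδα : MeasurableSet {r | δ r < α} := (isOpen_lt hδc continuous_const).measurableSet
  have hπα : MeasurableSet {r | α < π r} := (isOpen_lt continuous_const hπc).measurableSet
  constructor
  · have hlower : ENNReal.ofReal α ≤ P {r | δ r < α} := by
      simpa using ofReal_sub_le_of_focal_subset (E := cloudFocalSet δ π) hP hδα
        (Ioc_subset_Ioc_right hα1) fun β hβ => cloudFocalSet_subset_setOf_lt_of_le hβ.2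
    simpa [compl_ofPred] using prob_compl_le_ofReal_one_sub hδα hα0 hlower
  · exact ofReal_sub_le_of_focal_subset (E := cloudFocalSet δ π) hP hπα
      (Ioc_subset_Ioc_left hα0) fun β hβ => cloudFocalSet_subset_setOf_lt_of_lt hβ.1

/-- let `(δ, π)` be a cloud on `ℝ` with continuous distributions.
Any Borel probability measure `P` dominating the belief function of the
continuous random set with uniform mass density on `α ∈ (0,1]` and focal sets
`E_α = {r | π r ≥ α ∧ δ r < α}` (i.e. `P A ≥ λ*{α ∈ (0,1] | E_α ⊆ A}` for all
Borel `A`, where `λ*` is Lebesgue outer measure) belongs to the credal set of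
the cloud. -/
theorem continuous_cloud_random_set_inner_approx (δ π : ℝ → ℝ)
    (hδc : Continuous δ) (hπc : Continuous π)
    (hδ0 : ∀ r, 0 ≤ δ r) (hπ1 : ∀ r, π r ≤ 1) (hle : ∀ r, δ r ≤ π r)
    (h1 : ∃ r, π r = 1) (h0 : ∃ r, δ r = 0)
    (P : Measure ℝ) [IsProbabilityMeasure P]
    (hP : ∀ A : Set ℝ, MeasurableSet A →
      volume {α : ℝ | α ∈ Set.Ioc (0 : ℝ) 1 ∧ {r : ℝ | α ≤ π r ∧ δ r < α} ⊆ A} ≤ P A) :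
    ∀ α : ℝ, 0 ≤ α → α ≤ 1 →
      P {r : ℝ | α ≤ δ r} ≤ ENNReal.ofReal (1 - α) ∧
      ENNReal.ofReal (1 - α) ≤ P {r : ℝ | α < π r} :=
  continuous_cloud_random_set_inner_approx_general δ π hδc hπc P hP
end

section
/- Let a < b be real numbers and let F̲, F̄ : [a,b] → [0,1] be continuous, strictly increasing functions with F̲ ≤ F̄ pointwise, F̲(a) = F̄(a) = 0 and F̲(b) = F̄(b) = 1 (a continuous p-box). For α ∈ [0,1] let x(α) = F̄⁻¹(α) and y(α) = F̲⁻¹(α), so that E_α = [x(α), y(α)] is a closed interval. Then for every Borel probability measure P on [a,b], the following are equivalent: (i) F̲(r) ≤ P([a,r]) ≤ F̄(r) for every r ∈ [a,b]; (ii) P(A) ≥ λ*({α ∈ [0,1] : [x(α), y(α)] ⊆ A}) for every Borel set A ⊆ [a,b], where λ* is Lebesgue outer measure on [0,1]. That is, the credal set of the p-box equals the credal set of the continuous random set with uniform mass density and focal sets E_α. -/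
/-!
The quantile function `α ↦ inf {t | α ≤ F_P t}` of the cdf `F_P` of `P` pushes the uniform
measure on `(0, 1)` forward to `P`. If `P` lies in the p-box, then `F̲ ≤ F_P ≤ F̄` places the
quantile at level `α` inside `E_α = [F̄⁻¹ α, F̲⁻¹ α]`, except at the countably many levels where
`F_P` is flat; hence `λ {α | E_α ⊆ A} ≤ λ {α | quantile α ∈ A} = P A`. Conversely,
`E_α ⊆ [a, r]` for `α ≤ F̲ r` and `E_α ⊆ (r, b]` for `α > F̄ r`, so the random-set bound
applied to these two sets gives the p-box bounds.
-/

open MeasureTheory ProbabilityTheory Set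

namespace ProbabilityTheory

/-- Junk (`sInf` of an empty or unbounded set) unless `α ∈ Ioo 0 1`. -/
noncomputable def quantile (μ : Measure ℝ) (α : ℝ) : ℝ := sInf {t | α ≤ cdf μ t}

variable {μ : Measure ℝ} {α t : ℝ}

lemma nonempty_setOf_le_cdf (hα : α < 1) : {t | α ≤ cdf μ t}.Nonempty :=
  (((tendsto_cdf_atTop μ).eventually (lt_mem_nhds hα)).exists).imp fun _ => le_of_lt

lemma bddBelow_setOf_le_cdf (hα : 0 < α) : BddBelow {t | α ≤ cdf μ t} := by
  obtain ⟨s, hs⟩ := ((tendsto_cdf_atBot μ).eventually (gt_mem_nhds hα)).exists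
  exact ⟨s, fun t ht => ((monotone_cdf μ).reflect_lt (hs.trans_le ht)).le⟩

lemma quantile_le_iff (hα : α ∈ Ioo 0 1) : quantile μ α ≤ t ↔ α ≤ cdf μ t := by
  refine ⟨fun h => ?_, fun h => csInf_le (bddBelow_setOf_le_cdf hα.1) h⟩
  refine ge_of_tendsto (((cdf μ).right_continuous t).mono_left
    (nhdsWithin_mono _ Ioi_subset_Ici_self)) ?_
  filter_upwards [self_mem_nhdsWithin] with s hs
  obtain ⟨u, hu, hus⟩ := exists_lt_of_csInf_lt (nonempty_setOf_le_cdf hα.2) (h.trans_lt hs)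
  exact hu.trans (monotone_cdf μ hus.le)

lemma le_quantile_of_cdf_le (hα : α ∈ Ioo 0 1) (hflat : α ∉ range fun q : ℚ => cdf μ q)
    (ht : cdf μ t ≤ α) : t ≤ quantile μ α := by
  by_contra! h
  -- otherwise `cdf μ = α` on `[quantile μ α, t]`, in particular at a rational point
  obtain ⟨q, hq, hqt⟩ := exists_rat_btwn h
  exact hflat ⟨q, le_antisymm (monotone_cdf μ hqt.le |>.trans ht) ((quantile_le_iff hα).1 hq.le)⟩

lemma monotoneOn_quantile : MonotoneOn (quantile μ) (Ioo 0 1) := fun _ hα _ hβ hαβ =>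
  (quantile_le_iff hα).2 (hαβ.trans ((quantile_le_iff hβ).1 le_rfl))

lemma aemeasurable_quantile : AEMeasurable (quantile μ) (volume.restrict (Ioo 0 1)) :=
  aemeasurable_restrict_of_monotoneOn measurableSet_Ioo monotoneOn_quantile

lemma map_quantile_volume [IsProbabilityMeasure μ] :
    (volume.restrict (Ioo 0 1)).map (quantile μ) = μ := by
  refine Measure.ext_of_Iic _ _ fun t => ?_
  have hpre : quantile μ ⁻¹' Iic t =ᵐ[volume.restrict (Ioo 0 1)] Iic (cdf μ t) := by
    filter_upwards [ae_restrict_mem measurableSet_Ioo] with α hα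
    exact propext (quantile_le_iff hα)
  rw [Measure.map_apply_of_aemeasurable aemeasurable_quantile measurableSet_Iic,
    measure_congr hpre, Measure.restrict_congr_set Ioo_ae_eq_Ioc,
    Measure.restrict_apply measurableSet_Iic, Iic_inter_Ioc_of_le (cdf_le_one μ t),
    Real.volume_Ioc, sub_zero, ofReal_cdf]

lemma volume_setOf_subset_le_of_ae_quantile_mem [IsProbabilityMeasure μ] {E : ℝ → Set ℝ}
    (hE : ∀ᵐ α ∂volume.restrict (Ioo 0 1), quantile μ α ∈ E α) {A : Set ℝ}
    (hA : MeasurableSet A) : volume {α | α ∈ Icc (0 : ℝ) 1 ∧ E α ⊆ A} ≤ μ A :=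
  calc volume {α | α ∈ Icc (0 : ℝ) 1 ∧ E α ⊆ A}
      ≤ volume ({α | E α ⊆ A} ∩ Ioo 0 1) :=
        measure_mono_ae <| (Ioo_ae_eq_Icc (μ := volume)).symm.le.mono fun _ hIoo hα =>
          ⟨hα.2, hIoo hα.1⟩
    _ ≤ volume.restrict (Ioo 0 1) (quantile μ ⁻¹' A) := by
        rw [← Measure.restrict_apply' measurableSet_Ioo]
        exact measure_mono_ae (hE.mono fun _ hα hsub => hsub hα)
    _ = μ A := by
        rw [← Measure.map_apply_of_aemeasurable aemeasurable_quantile hA, map_quantile_volume]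

end ProbabilityTheory

section PBox

variable {P : Measure ℝ} {a b r : ℝ} {Flow Fbar x y : ℝ → ℝ}

lemma measure_Icc_eq_ofReal_cdf [IsProbabilityMeasure P] (hP : P (Iio a) = 0) (hr : a ≤ r) :
    P (Icc a r) = ENNReal.ofReal (cdf P r) := by
  rw [ofReal_cdf, ← Iio_union_Icc_eq_Iic hr,
    measure_congr (union_ae_eq_right_of_ae_eq_empty (ae_eq_empty.mpr hP))]

lemma ae_quantile_mem_Icc_of_pbox [IsProbabilityMeasure P] (hP : P (Iio a) = 0)
    (hx : ∀ α ∈ Icc (0 : ℝ) 1, x α ∈ Icc a b ∧ Fbar (x α) = α)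
    (hy : ∀ α ∈ Icc (0 : ℝ) 1, y α ∈ Icc a b ∧ Flow (y α) = α)
    (H : ∀ r ∈ Icc a b,
      ENNReal.ofReal (Flow r) ≤ P (Icc a r) ∧ P (Icc a r) ≤ ENNReal.ofReal (Fbar r)) :
    ∀ᵐ α ∂volume.restrict (Ioo 0 1), quantile P α ∈ Icc (x α) (y α) := by
  filter_upwards [ae_restrict_mem measurableSet_Ioo,
    ae_restrict_of_ae ((countable_range fun q : ℚ => cdf P q).ae_notMem volume)]
    with α hα hflat
  obtain ⟨hxI, hxα⟩ := hx α (Ioo_subset_Icc_self hα)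
  obtain ⟨hyI, hyα⟩ := hy α (Ioo_subset_Icc_self hα)
  have hcx : cdf P (x α) ≤ α := by
    have := (H _ hxI).2
    rwa [hxα, measure_Icc_eq_ofReal_cdf hP hxI.1, ENNReal.ofReal_le_ofReal_iff hα.1.le] at this
  have hcy : α ≤ cdf P (y α) := by
    have := (H _ hyI).1
    rwa [hyα, measure_Icc_eq_ofReal_cdf hP hyI.1,
      ENNReal.ofReal_le_ofReal_iff (cdf_nonneg _ _)] at this
  exact ⟨le_quantile_of_cdf_le hα hflat hcx, (quantile_le_iff hα).2 hcy⟩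

lemma ofReal_le_measure_Icc_of_randomSet_le (hFlm : StrictMonoOn Flow (Icc a b))
    (hFlb : Flow b = 1) (hxa : ∀ α ∈ Icc (0 : ℝ) 1, a ≤ x α)
    (hy : ∀ α ∈ Icc (0 : ℝ) 1, y α ∈ Icc a b ∧ Flow (y α) = α)
    (H : ∀ A : Set ℝ, MeasurableSet A → A ⊆ Icc a b →
      volume {α : ℝ | α ∈ Icc (0 : ℝ) 1 ∧ Icc (x α) (y α) ⊆ A} ≤ P A)
    (hr : r ∈ Icc a b) : ENNReal.ofReal (Flow r) ≤ P (Icc a r) := by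
  have hfocal : Icc 0 (Flow r) ⊆ {α | α ∈ Icc (0 : ℝ) 1 ∧ Icc (x α) (y α) ⊆ Icc a r} := by
    intro α hα
    have hα1 : α ∈ Icc (0 : ℝ) 1 :=
      ⟨hα.1, hα.2.trans (hFlb ▸ hFlm.monotoneOn hr ⟨hr.1.trans hr.2, le_rfl⟩ hr.2)⟩
    obtain ⟨hyI, hyα⟩ := hy α hα1
    exact ⟨hα1, Icc_subset_Icc (hxa α hα1) ((hFlm.le_iff_le hyI hr).1 (hyα.trans_le hα.2))⟩
  calc ENNReal.ofReal (Flow r) = volume (Icc 0 (Flow r)) := by rw [Real.volume_Icc, sub_zero]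
    _ ≤ P (Icc a r) := (measure_mono hfocal).trans
        (H _ measurableSet_Icc (Icc_subset_Icc_right hr.2))

lemma measure_Icc_le_ofReal_of_randomSet_le [IsFiniteMeasure P] (hsupp : P (Icc a b) = 1)
    (hFbm : StrictMonoOn Fbar (Icc a b)) (hFba : Fbar a = 0) (hFbb : Fbar b = 1)
    (hx : ∀ α ∈ Icc (0 : ℝ) 1, x α ∈ Icc a b ∧ Fbar (x α) = α)
    (hyb : ∀ α ∈ Icc (0 : ℝ) 1, y α ≤ b)
    (H : ∀ A : Set ℝ, MeasurableSet A → A ⊆ Icc a b →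
      volume {α : ℝ | α ∈ Icc (0 : ℝ) 1 ∧ Icc (x α) (y α) ⊆ A} ≤ P A)
    (hr : r ∈ Icc a b) : P (Icc a r) ≤ ENNReal.ofReal (Fbar r) := by
  have hF : Fbar r ∈ Icc (0 : ℝ) 1 :=
    ⟨hFba ▸ hFbm.monotoneOn ⟨le_rfl, hr.1.trans hr.2⟩ hr hr.1,
      hFbb ▸ hFbm.monotoneOn hr ⟨hr.1.trans hr.2, le_rfl⟩ hr.2⟩
  have hfocal : Ioc (Fbar r) 1 ⊆ {α | α ∈ Icc (0 : ℝ) 1 ∧ Icc (x α) (y α) ⊆ Ioc r b} := by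
    intro α hα
    have hα1 : α ∈ Icc (0 : ℝ) 1 := ⟨hF.1.trans hα.1.le, hα.2⟩
    obtain ⟨hxI, hxα⟩ := hx α hα1
    exact ⟨hα1, Icc_subset_Ioc ((hFbm.lt_iff_lt hr hxI).1 (hα.1.trans_eq hxα.symm)) (hyb α hα1)⟩
  have hright : ENNReal.ofReal (1 - Fbar r) ≤ P (Ioc r b) :=
    calc ENNReal.ofReal (1 - Fbar r) = volume (Ioc (Fbar r) 1) := (Real.volume_Ioc).symm
      _ ≤ P (Ioc r b) := (measure_mono hfocal).trans
          (H _ measurableSet_Ioc fun _ ht => ⟨hr.1.trans ht.1.le, ht.2⟩)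
  have hsplit : P (Icc a r) + P (Ioc r b) = 1 := by
    rw [← measure_union (disjoint_left.2 fun _ h h' => h'.1.not_ge h.2) measurableSet_Ioc,
      Icc_union_Ioc_eq_Icc hr.1 hr.2, hsupp]
  calc P (Icc a r) = 1 - P (Ioc r b) := ENNReal.eq_sub_of_add_eq (measure_ne_top _ _) hsplit
    _ ≤ 1 - ENNReal.ofReal (1 - Fbar r) := tsub_le_tsub_left hright 1
    _ = ENNReal.ofReal (Fbar r) := by
        rw [← ENNReal.ofReal_one, ← ENNReal.ofReal_sub _ (sub_nonneg.2 hF.2), sub_sub_cancel]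

end PBox

theorem continuous_pbox_eq_random_set_general (a b : ℝ)
    (Flow Fbar : ℝ → ℝ)
    (hFlm : StrictMonoOn Flow (Set.Icc a b)) (hFbm : StrictMonoOn Fbar (Set.Icc a b))
    (hFba : Fbar a = 0) (hFlb : Flow b = 1) (hFbb : Fbar b = 1)
    (x y : ℝ → ℝ)
    (hx : ∀ α ∈ Set.Icc (0 : ℝ) 1, x α ∈ Set.Icc a b ∧ Fbar (x α) = α)
    (hy : ∀ α ∈ Set.Icc (0 : ℝ) 1, y α ∈ Set.Icc a b ∧ Flow (y α) = α)
    (P : Measure ℝ) [IsProbabilityMeasure P] (hsupp : P (Set.Icc a b) = 1) :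
    (∀ r ∈ Set.Icc a b,
        ENNReal.ofReal (Flow r) ≤ P (Set.Icc a r) ∧
        P (Set.Icc a r) ≤ ENNReal.ofReal (Fbar r)) ↔
      (∀ A : Set ℝ, MeasurableSet A → A ⊆ Set.Icc a b →
        volume {α : ℝ | α ∈ Set.Icc (0 : ℝ) 1 ∧ Set.Icc (x α) (y α) ⊆ A} ≤ P A) := by
  have hP : P (Iio a) = 0 := measure_mono_null (fun _ ht => notMem_Icc_of_lt ht)
    ((prob_compl_eq_zero_iff measurableSet_Icc).2 hsupp)
  exact ⟨fun H _ hA _ =>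
      volume_setOf_subset_le_of_ae_quantile_mem (ae_quantile_mem_Icc_of_pbox hP hx hy H) hA,
    fun H _ hr =>
      ⟨ofReal_le_measure_Icc_of_randomSet_le hFlm hFlb (fun α hα => (hx α hα).1.1) hy H hr,
        measure_Icc_le_ofReal_of_randomSet_le hsupp hFbm hFba hFbb hx
          (fun α hα => (hy α hα).1.2) H hr⟩⟩

/-- a continuous p-box `(F̲, F̄)` on `[a, b]`, with both
cumulative functions continuous and strictly increasing from `0` to `1`, has
the same credal set as the continuous random set with uniform mass density on
`α ∈ [0,1]` and focal sets `E_α = [x α, y α]`, where `x α = F̄⁻¹ α` and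
`y α = F̲⁻¹ α`: a Borel probability measure `P` supported on `[a, b]` satisfies
`F̲ r ≤ P [a, r] ≤ F̄ r` for all `r ∈ [a, b]` iff
`P A ≥ λ*{α ∈ [0,1] | [x α, y α] ⊆ A}` for every Borel `A ⊆ [a, b]`. -/
theorem continuous_pbox_eq_random_set (a b : ℝ) (hab : a < b)
    (Flow Fbar : ℝ → ℝ)
    (hFlc : ContinuousOn Flow (Set.Icc a b)) (hFbc : ContinuousOn Fbar (Set.Icc a b))
    (hFlm : StrictMonoOn Flow (Set.Icc a b)) (hFbm : StrictMonoOn Fbar (Set.Icc a b))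
    (hle : ∀ r ∈ Set.Icc a b, Flow r ≤ Fbar r)
    (hFla : Flow a = 0) (hFba : Fbar a = 0) (hFlb : Flow b = 1) (hFbb : Fbar b = 1)
    (x y : ℝ → ℝ)
    (hx : ∀ α ∈ Set.Icc (0 : ℝ) 1, x α ∈ Set.Icc a b ∧ Fbar (x α) = α)
    (hy : ∀ α ∈ Set.Icc (0 : ℝ) 1, y α ∈ Set.Icc a b ∧ Flow (y α) = α)
    (P : Measure ℝ) [IsProbabilityMeasure P] (hsupp : P (Set.Icc a b) = 1) :
    (∀ r ∈ Set.Icc a b,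
        ENNReal.ofReal (Flow r) ≤ P (Set.Icc a r) ∧
        P (Set.Icc a r) ≤ ENNReal.ofReal (Fbar r)) ↔
      (∀ A : Set ℝ, MeasurableSet A → A ⊆ Set.Icc a b →
        volume {α : ℝ | α ∈ Set.Icc (0 : ℝ) 1 ∧ Set.Icc (x α) (y α) ⊆ A} ≤ P A) :=
  continuous_pbox_eq_random_set_general a b Flow Fbar hFlm hFbm hFba hFlb hFbb x y hx hy P hsupp
end

section
/- Let π : ℝ → [0,1] be a continuous function with π(m) = 1 for some m ∈ ℝ and π(c) = 0 for some c ∈ ℝ, so that (π, π) is a thin cloud on ℝ. Then the credal set 𝒫[π,π] is nonempty: there exists a Borel probability measure P on ℝ such that for every α ∈ [0,1], P({r : π(r) ≥ α}) ≤ 1 − α ≤ P({r : π(r) > α}). -/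
/-!
If `π` pushes `P` forward to the uniform distribution on `[0, 1]`, then
`P {α ≤ π} = P {α < π} = 1 - α`, so both credal inequalities hold with equality. Such a `P`
exists: by the intermediate value theorem `π` maps the interval between `m` and `z` onto
`[0, 1]`, choosing in that interval the least point of each fibre gives a Borel measurable
section of `π` over `[0, 1]`, and `P` is the image of the uniform distribution under this section.
-/

open MeasureTheory Set

section FiberInf

variable {α β : Type*} [ConditionallyCompleteLinearOrder α] [TopologicalSpace α] [OrderTopology α]
  [TopologicalSpace β]

noncomputable def fiberInf (f : α → β) (K : Set α) (y : β) : α :=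
  sInf (K ∩ f ⁻¹' {y})

variable {f : α → β} {K : Set α}

theorem IsCompact.fiberInf_mem [T1Space β] (hK : IsCompact K) (hf : Continuous f) {y : β}
    (hy : y ∈ f '' K) : fiberInf f K y ∈ K ∩ f ⁻¹' {y} := by
  obtain ⟨x, hxK, rfl⟩ := hy
  exact (hK.inter_right (isClosed_singleton.preimage hf)).isClosed.csInf_mem ⟨x, hxK, rfl⟩
    (hK.bddBelow.mono inter_subset_left)

/-- Off `f '' K` the fibre is empty, so `fiberInf` takes the junk value `sInf ∅` there. -/
theorem IsCompact.preimage_fiberInf_Iic [T1Space β] (hK : IsCompact K) (hf : Continuous f)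
    (c : α) :
    fiberInf f K ⁻¹' Iic c = f '' (K ∩ Iic c) ∪ (f '' K)ᶜ ∩ {_y | sInf (∅ : Set α) ≤ c} := by
  ext y
  by_cases hy : y ∈ f '' K
  · have hmem := hK.fiberInf_mem hf hy
    simp only [mem_preimage, mem_Iic, mem_union, mem_inter_iff, mem_compl_iff, hy,
      not_true_eq_false, false_and, or_false]
    constructor
    · intro h
      exact ⟨_, ⟨hmem.1, h⟩, hmem.2⟩
    · rintro ⟨x, ⟨hxK, hxc⟩, hxy⟩
      exact (csInf_le (hK.bddBelow.mono inter_subset_left) ⟨hxK, hxy⟩).trans hxc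
  · have hempty : K ∩ f ⁻¹' {y} = ∅ :=
      eq_empty_of_forall_notMem fun x hx => hy ⟨x, hx.1, hx.2⟩
    have hyc : y ∉ f '' (K ∩ Iic c) := fun h => hy (image_mono inter_subset_left h)
    simp [fiberInf, hempty, hy, hyc]

variable [SecondCountableTopology α] [MeasurableSpace α] [BorelSpace α]
  [T2Space β] [MeasurableSpace β] [BorelSpace β]

theorem IsCompact.measurable_fiberInf (hK : IsCompact K) (hf : Continuous f) :
    Measurable (fiberInf f K) := by
  refine measurable_of_Iic fun c => ?_
  rw [hK.preimage_fiberInf_Iic hf]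
  exact ((hK.inter_right isClosed_Iic).image hf).isClosed.measurableSet.union
    ((hK.image hf).isClosed.measurableSet.compl.inter (MeasurableSet.const _))

theorem Continuous.exists_map_eq_of_ae_mem_image (hf : Continuous f) (hK : IsCompact K)
    {μ : Measure β} (hμ : ∀ᵐ y ∂μ, y ∈ f '' K) : ∃ P : Measure α, P.map f = μ := by
  refine ⟨μ.map (fiberInf f K), ?_⟩
  rw [Measure.map_map hf.measurable (hK.measurable_fiberInf hf),
    Measure.map_congr (f := f ∘ fiberInf f K) (g := id)
      (hμ.mono fun y hy => (hK.fiberInf_mem hf hy).2),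
    Measure.map_id]

end FiberInf

theorem continuous_thin_cloud_nonempty_general (π : ℝ → ℝ) (hc : Continuous π)
    (hm : ∃ m, π m = 1) (hz : ∃ z, π z = 0) :
    ∃ P : Measure ℝ, IsProbabilityMeasure P ∧
      ∀ α : ℝ, 0 ≤ α → α ≤ 1 →
        P {r : ℝ | α ≤ π r} ≤ ENNReal.ofReal (1 - α) ∧
        ENNReal.ofReal (1 - α) ≤ P {r : ℝ | α < π r} := by
  obtain ⟨m, hm⟩ := hm
  obtain ⟨z, hz⟩ := hz
  have hsurj : Icc (0 : ℝ) 1 ⊆ π '' uIcc m z := by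
    simpa [hm, hz, uIcc_comm] using intermediate_value_uIcc hc.continuousOn (a := m) (b := z)
  obtain ⟨P, hP⟩ := hc.exists_map_eq_of_ae_mem_image isCompact_uIcc
    (ae_restrict_of_forall_mem measurableSet_Icc hsurj)
  have hPπ : ∀ s, MeasurableSet s → P (π ⁻¹' s) = volume (s ∩ Icc 0 1) := fun s hs => by
    rw [← Measure.map_apply hc.measurable hs, hP, Measure.restrict_apply hs]
  refine ⟨P, ⟨by simpa using hPπ univ MeasurableSet.univ⟩,
    fun α hα _ => ⟨le_of_eq ?_, ge_of_eq ?_⟩⟩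
  · rw [show {r | α ≤ π r} = π ⁻¹' Ici α from rfl, hPπ _ measurableSet_Ici, ← Ici_inter_Iic,
      ← inter_assoc, Ici_inter_Ici, max_eq_left hα, Ici_inter_Iic, Real.volume_Icc]
  · rw [show {r | α < π r} = π ⁻¹' Ioi α from rfl, hPπ _ measurableSet_Ioi, ← Ici_inter_Iic,
      ← inter_assoc, inter_eq_left.2 (Ioi_subset_Ici hα), Ioi_inter_Iic, Real.volume_Ioc]

/-- a thin cloud `(π, π)` on `ℝ` with continuous `π` (attaining
the values `1` and `0`) has a nonempty credal set: some Borel probability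
measure `P` satisfies `P {π ≥ α} ≤ 1 - α ≤ P {π > α}` for every `α ∈ [0,1]`. -/
theorem continuous_thin_cloud_nonempty (π : ℝ → ℝ) (hc : Continuous π)
    (h0 : ∀ r, 0 ≤ π r) (h1 : ∀ r, π r ≤ 1)
    (hm : ∃ m, π m = 1) (hz : ∃ z, π z = 0) :
    ∃ P : Measure ℝ, IsProbabilityMeasure P ∧
      ∀ α : ℝ, 0 ≤ α → α ≤ 1 →
        P {r : ℝ | α ≤ π r} ≤ ENNReal.ofReal (1 - α) ∧
        ENNReal.ofReal (1 - α) ≤ P {r : ℝ | α < π r} :=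
  continuous_thin_cloud_nonempty_general π hc hm hz
end

section
/- Let π : ℝ → [0,1] be continuous, with π(m) = 1 for some m ∈ ℝ, non-decreasing on (−∞, m], non-increasing on [m, ∞), and π(t) → 0 as t → ±∞ (a continuous unimodal fuzzy interval). Then F(x) = sup_{t ≤ x} π(t) is the cumulative distribution function of a Borel probability measure P on ℝ, and this P satisfies, for every α ∈ [0,1): P({t : π(t) > α}) = P({t : π(t) ≥ α}) = 1 − α. In particular P belongs to both 𝒫_π and 𝒫_{1−π}, i.e., for every α ∈ [0,1), P({t : π(t) > α}) ≥ 1 − α and P({t : π(t) ≥ α}) ≤ 1 − α. -/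
open MeasureTheory Filter Set
open scoped Topology

/-!
Truncating `π` at its mode gives `F x = π (min x m) = sup_{t ≤ x} π t`, a continuous
distribution function whose Stieltjes measure `P` has no atoms and is carried by `(-∞, m]`, where
`F = π`. So it suffices that `P {F ≤ α} = P {F < α} = α`: the closed set `{F ≤ α}` lies in
`(-∞, a]` for its largest point `a`, where `F a ≤ α`, and the open set `{F < α}` contains
`(-∞, b)` for the least point `b` of its complement, where `α ≤ F b`.
-/

theorem MonotoneOn.monotone_comp_min {α β : Type*} [LinearOrder α] [Preorder β] {g : α → β}
    {m : α} (hg : MonotoneOn g (Iic m)) : Monotone fun x => g (min x m) :=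
  fun _ _ hxy => hg (min_le_right _ _) (min_le_right _ _) (min_le_min_right m hxy)

theorem MonotoneOn.csSup_image_Iic {α β : Type*} [LinearOrder α] [ConditionallyCompleteLattice β]
    {g : α → β} {m : α} (hg : MonotoneOn g (Iic m)) (hmax : ∀ t, g t ≤ g m) (x : α) :
    sSup (g '' Iic x) = g (min x m) := by
  refine IsGreatest.csSup_eq ⟨mem_image_of_mem g (min_le_left x m), ?_⟩
  rintro _ ⟨t, htx, rfl⟩
  rcases le_total t m with htm | hmt
  · exact hg htm (min_le_right x m) (le_min htx htm)
  · rw [min_eq_right (hmt.trans htx)]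
    exact hmax t

namespace StieltjesFunction

variable {f : StieltjesFunction ℝ}

theorem measure_Iio_of_continuous (hf : Continuous f) (hbot : Tendsto f atBot (𝓝 0)) (x : ℝ) :
    f.measure (Iio x) = ENNReal.ofReal (f x) := by
  rw [f.measure_Iio hbot, hf.continuousWithinAt.leftLim_eq, sub_zero]

theorem measure_setOf_le_le (hf : Continuous f) (hbot : Tendsto f atBot (𝓝 0))
    (htop : Tendsto f atTop (𝓝 1)) {α : ℝ} (hα : α < 1) :
    f.measure {x | f x ≤ α} ≤ ENNReal.ofReal α := by
  set S := {x | f x ≤ α}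
  rcases S.eq_empty_or_nonempty with hS | hS
  · simp [hS]
  obtain ⟨N, hN⟩ := eventually_atTop.1 (htop.eventually (lt_mem_nhds hα))
  have hbdd : BddAbove S := ⟨N, fun x hx => le_of_not_gt fun h => (hN x h.le).not_ge hx⟩
  have hmem : sSup S ∈ S := (isClosed_le hf continuous_const).csSup_mem hS hbdd
  calc f.measure S ≤ f.measure (Iic (sSup S)) := measure_mono fun x hx => le_csSup hbdd hx
    _ = ENNReal.ofReal (f (sSup S)) := by rw [f.measure_Iic hbot, sub_zero]
    _ ≤ ENNReal.ofReal α := ENNReal.ofReal_le_ofReal hmem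

theorem ofReal_le_measure_setOf_lt (hf : Continuous f) (hbot : Tendsto f atBot (𝓝 0))
    (htop : Tendsto f atTop (𝓝 1)) {α : ℝ} (hα : α < 1) :
    ENNReal.ofReal α ≤ f.measure {x | f x < α} := by
  rcases le_or_gt α 0 with hα0 | hα0
  · simp [ENNReal.ofReal_of_nonpos hα0]
  set S := {x | α ≤ f x}
  obtain ⟨N, hN⟩ := eventually_atTop.1 (htop.eventually (lt_mem_nhds hα))
  obtain ⟨M, hM⟩ := eventually_atBot.1 (hbot.eventually (gt_mem_nhds hα0))
  have hS : S.Nonempty := ⟨N, (hN N le_rfl).le⟩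
  have hbdd : BddBelow S := ⟨M, fun x hx => le_of_not_gt fun h => (hM x h.le).not_ge hx⟩
  have hmem : sInf S ∈ S := (isClosed_le continuous_const hf).csInf_mem hS hbdd
  calc ENNReal.ofReal α ≤ ENNReal.ofReal (f (sInf S)) := ENNReal.ofReal_le_ofReal hmem
    _ = f.measure (Iio (sInf S)) := (measure_Iio_of_continuous hf hbot _).symm
    _ ≤ f.measure {x | f x < α} :=
      measure_mono fun x (hx : x < sInf S) =>
        show f x < α from lt_of_not_ge fun h => hx.not_ge (csInf_le hbdd h)

theorem measure_setOf_lt (hf : Continuous f) (hbot : Tendsto f atBot (𝓝 0))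
    (htop : Tendsto f atTop (𝓝 1)) {α : ℝ} (hα : α < 1) :
    f.measure {x | f x < α} = ENNReal.ofReal α :=
  le_antisymm
    ((measure_mono (ofPred_subset_ofPred_of_imp fun _ => le_of_lt)).trans
      (measure_setOf_le_le hf hbot htop hα))
    (ofReal_le_measure_setOf_lt hf hbot htop hα)

theorem measure_setOf_le (hf : Continuous f) (hbot : Tendsto f atBot (𝓝 0))
    (htop : Tendsto f atTop (𝓝 1)) {α : ℝ} (hα : α < 1) :
    f.measure {x | f x ≤ α} = ENNReal.ofReal α :=
  le_antisymm (measure_setOf_le_le hf hbot htop hα)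
    ((ofReal_le_measure_setOf_lt hf hbot htop hα).trans
      (measure_mono (ofPred_subset_ofPred_of_imp fun _ => le_of_lt)))

theorem measure_setOf_gt (hf : Continuous f) (hbot : Tendsto f atBot (𝓝 0))
    (htop : Tendsto f atTop (𝓝 1)) {α : ℝ} (hα0 : 0 ≤ α) (hα : α < 1) :
    f.measure {x | α < f x} = ENNReal.ofReal (1 - α) := by
  have := f.isProbabilityMeasure hbot htop
  have hset : {x | α < f x} = {x | f x ≤ α}ᶜ := by ext; simp
  rw [hset, prob_compl_eq_one_sub (measurableSet_le hf.measurable measurable_const),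
    measure_setOf_le hf hbot htop hα, ← ENNReal.ofReal_one, ← ENNReal.ofReal_sub _ hα0]

theorem measure_setOf_ge (hf : Continuous f) (hbot : Tendsto f atBot (𝓝 0))
    (htop : Tendsto f atTop (𝓝 1)) {α : ℝ} (hα0 : 0 ≤ α) (hα : α < 1) :
    f.measure {x | α ≤ f x} = ENNReal.ofReal (1 - α) := by
  have := f.isProbabilityMeasure hbot htop
  have hset : {x | α ≤ f x} = {x | f x < α}ᶜ := by ext; simp
  rw [hset, prob_compl_eq_one_sub (measurableSet_lt hf.measurable measurable_const),
    measure_setOf_lt hf hbot htop hα, ← ENNReal.ofReal_one, ← ENNReal.ofReal_sub _ hα0]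

end StieltjesFunction

theorem thin_cloud_fuzzy_interval_measure_general (π : ℝ → ℝ) (hc : Continuous π)
    (h1 : ∀ t, π t ≤ 1)
    (m : ℝ) (hm : π m = 1)
    (hmono : MonotoneOn π (Set.Iic m))
    (hbot : Tendsto π atBot (nhds 0)) :
    ∃ P : Measure ℝ, IsProbabilityMeasure P ∧
      (∀ x : ℝ, P (Set.Iic x) = ENNReal.ofReal (sSup (π '' Set.Iic x))) ∧
      (∀ α : ℝ, 0 ≤ α → α < 1 →
        P {t : ℝ | α < π t} = ENNReal.ofReal (1 - α) ∧
        P {t : ℝ | α ≤ π t} = ENNReal.ofReal (1 - α) ∧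
        ENNReal.ofReal (1 - α) ≤ P {t : ℝ | α < π t} ∧
        P {t : ℝ | α ≤ π t} ≤ ENNReal.ofReal (1 - α)) := by
  have hF : Continuous fun x => π (min x m) := hc.comp (continuous_id.min continuous_const)
  let F : StieltjesFunction ℝ :=
    ⟨fun x => π (min x m), hmono.monotone_comp_min, fun _ => hF.continuousWithinAt⟩
  have hFbot : Tendsto F atBot (𝓝 0) :=
    hbot.congr' <| (eventually_le_atBot m).mono fun x hx => by simp [F, min_eq_left hx]
  have hFtop : Tendsto F atTop (𝓝 1) :=
    tendsto_const_nhds.congr' <| (eventually_ge_atTop m).mono fun x hx => by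
      simp [F, min_eq_right hx, hm]
  have hFπ : F =ᵐ[F.measure] π := by
    have hIoi : F.measure (Ioi m) = 0 := by simp [F.measure_Ioi hFtop, F, hm]
    filter_upwards [measure_eq_zero_iff_ae_notMem.1 hIoi] with x (hx : ¬m < x)
    simp [F, min_eq_left (not_lt.1 hx)]
  refine ⟨F.measure, F.isProbabilityMeasure hFbot hFtop, fun x => ?_, fun α hα0 hα1 => ?_⟩
  · rw [F.measure_Iic hFbot, sub_zero, hmono.csSup_image_Iic (fun t => hm ▸ h1 t)]
  have hgt : F.measure {t | α < π t} = ENNReal.ofReal (1 - α) :=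
    (measure_congr (hFπ.preimage (Ioi α))).symm.trans
      (StieltjesFunction.measure_setOf_gt hF hFbot hFtop hα0 hα1)
  have hge : F.measure {t | α ≤ π t} = ENNReal.ofReal (1 - α) :=
    (measure_congr (hFπ.preimage (Ici α))).symm.trans
      (StieltjesFunction.measure_setOf_ge hF hFbot hFtop hα0 hα1)
  exact ⟨hgt, hge, hgt.ge, hge.le⟩

/-- let `π : ℝ → [0,1]` be a continuous unimodal fuzzy interval:
`π m = 1`, `π` non-decreasing on `(-∞, m]`, non-increasing on `[m, ∞)`, and
tending to `0` at `±∞`.  Then `F x = sup_{t ≤ x} π t` is the cumulative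
distribution function of a Borel probability measure `P`, and this `P`
satisfies `P {π > α} = P {π ≥ α} = 1 - α` for every `α ∈ [0,1)`; in particular
`P` lies in both `𝒫_π` and `𝒫_{1-π}`, i.e. `P {π > α} ≥ 1 - α` and
`P {π ≥ α} ≤ 1 - α` for every `α ∈ [0,1)`. -/
theorem thin_cloud_fuzzy_interval_measure (π : ℝ → ℝ) (hc : Continuous π)
    (h0 : ∀ t, 0 ≤ π t) (h1 : ∀ t, π t ≤ 1)
    (m : ℝ) (hm : π m = 1)
    (hmono : MonotoneOn π (Set.Iic m)) (hanti : AntitoneOn π (Set.Ici m))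
    (htop : Tendsto π atTop (nhds 0)) (hbot : Tendsto π atBot (nhds 0)) :
    ∃ P : Measure ℝ, IsProbabilityMeasure P ∧
      (∀ x : ℝ, P (Set.Iic x) = ENNReal.ofReal (sSup (π '' Set.Iic x))) ∧
      (∀ α : ℝ, 0 ≤ α → α < 1 →
        P {t : ℝ | α < π t} = ENNReal.ofReal (1 - α) ∧
        P {t : ℝ | α ≤ π t} = ENNReal.ofReal (1 - α) ∧
        ENNReal.ofReal (1 - α) ≤ P {t : ℝ | α < π t} ∧
        P {t : ℝ | α ≤ π t} ≤ ENNReal.ofReal (1 - α)) :=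
  thin_cloud_fuzzy_interval_measure_general π hc h1 m hm hmono hbot
end
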